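/- arXiv:1904.09982 — 9 statements merged into one kernel-verified Lean document; each statement's English description precedes it below -/
import Mathlib

section
/- In a digroup (G,1) (a disemigroup with bar-unit 1 such that every a has an inverse a⁻¹ with a ⊢ a⁻¹ = 1 = a⁻¹ ⊣ a), the set J = {a⁻¹ : a ∈ G} of all inverses equals {a ⊢ 1 : a ∈ G}. -/
/-- A disemigroup: two associative operations `l` (⊢) and `r` (⊣)
satisfying the dialgebra axioms. -/
structure DisemigroupStruct (D : Type) where
  l : D → D → D
  r : D → D → D
  l_assoc : ∀ a b c, l (l a b) c = l a (l b c)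
  r_assoc : ∀ a b c, r (r a b) c = r a (r b c)
  ax1 : ∀ a b c, r a (l b c) = r a (r b c)
  ax2 : ∀ a b c, l (r a b) c = l (l a b) c
  ax3 : ∀ a b c, l a (r b c) = r (l a b) c

/-- A digroup: a disemigroup with a bar-unit `one` and inverses. -/
structure DigroupStruct (D : Type) extends DisemigroupStruct D where
  one : D
  inv : D → D
  one_l : ∀ a, l one a = a
  r_one : ∀ a, r a one = a
  l_inv : ∀ a, l a (inv a) = one
  inv_r : ∀ a, r (inv a) a = one

def IsDisemigroupHom {A B : Type} (G : DisemigroupStruct A) (H : DisemigroupStruct B)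
    (f : A → B) : Prop :=
  (∀ a b, f (G.l a b) = H.l (f a) (f b)) ∧ (∀ a b, f (G.r a b) = H.r (f a) (f b))

def IsDigroupHom {A B : Type} (G : DigroupStruct A) (H : DigroupStruct B)
    (f : A → B) : Prop :=
  (∀ a b, f (G.l a b) = H.l (f a) (f b)) ∧ (∀ a b, f (G.r a b) = H.r (f a) (f b)) ∧
  f G.one = H.one

/-- The group part J = {a ⊢ 1 : a ∈ G}. -/
def groupPart {A : Type} (G : DigroupStruct A) : Set A := {a | ∃ b, a = G.l b G.one}

/-- The halo: the set of bar-units. -/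
def halo {A : Type} (G : DigroupStruct A) : Set A := {e | ∀ a, G.l e a = a ∧ G.r a e = a}

/-- `(D, g1, g2)` is a free product (coproduct) of the digroups `D1`, `D2`. -/
def IsFreeProduct {A1 A2 B : Type} (D1 : DigroupStruct A1) (D2 : DigroupStruct A2)
    (D : DigroupStruct B) (g1 : A1 → B) (g2 : A2 → B) : Prop :=
  IsDigroupHom D1 D g1 ∧ IsDigroupHom D2 D g2 ∧
  ∀ {C : Type} (G : DigroupStruct C) (f1 : A1 → C) (f2 : A2 → C),
    IsDigroupHom D1 G f1 → IsDigroupHom D2 G f2 →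
    ∃! φ : B → C, IsDigroupHom D G φ ∧ φ ∘ g1 = f1 ∧ φ ∘ g2 = f2

/-- In a digroup `(G,1)`, the set of all inverses equals `{a ⊢ 1 : a ∈ G}`. -/
theorem inverses_eq_groupPart {D : Type} (G : DigroupStruct D) :
    {b | ∃ a, G.l a b = G.one ∧ G.r b a = G.one} = {b | ∃ a, b = G.l a G.one} := by
  ext b
  simp only [Set.mem_setOf_eq]
  constructor
  · rintro ⟨a, ha, hb⟩
    refine ⟨b, ?_⟩
    calc b = G.l G.one b := (G.one_l b).symm
    _ = G.l (G.r b a) b := by rw [hb]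
    _ = G.l (G.l b a) b := G.ax2 b a b
    _ = G.l b (G.l a b) := G.l_assoc b a b
    _ = G.l b G.one := by rw [ha]
  · rintro ⟨a, rfl⟩
    refine ⟨G.inv a, ?_, ?_⟩
    · calc G.l (G.inv a) (G.l a G.one) = G.l (G.l (G.inv a) a) G.one := (G.l_assoc _ _ _).symm
      _ = G.l (G.r (G.inv a) a) G.one := (G.ax2 _ _ _).symm
      _ = G.l G.one G.one := by rw [G.inv_r]
      _ = G.one := G.one_l _
    · have h1 : G.r G.one (G.inv a) = G.inv a := by
        calc G.r G.one (G.inv a) = G.r (G.r (G.inv a) a) (G.inv a) := by rw [G.inv_r]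
        _ = G.r (G.inv a) (G.r a (G.inv a)) := G.r_assoc _ _ _
        _ = G.r (G.inv a) (G.l a (G.inv a)) := (G.ax1 _ _ _).symm
        _ = G.r (G.inv a) G.one := by rw [G.l_inv]
        _ = G.inv a := G.r_one _
      calc G.r (G.l a G.one) (G.inv a) = G.l a (G.r G.one (G.inv a)) := (G.ax3 _ _ _).symm
      _ = G.l a (G.inv a) := by rw [h1]
      _ = G.one := G.l_inv a
end

section
/- In a digroup (G,1), the two operations ⊢ and ⊣ coincide on the set J = {a ⊢ 1 : a ∈ G}, and (J, ⊢) is a group with identity 1. -/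
lemma digroup_lA {D : Type} (G : DigroupStruct D) (x c : D) :
    G.l (G.l x G.one) c = G.l x c := by
  rw [← G.ax2, G.r_one]

lemma digroup_rB {D : Type} (G : DigroupStruct D) (y : D) :
    G.r G.one (G.l y G.one) = G.l y G.one := by
  have h : G.r G.one (G.l y G.one) = G.r (G.l y (G.inv y)) (G.l y G.one) := by
    rw [G.l_inv]
  rw [h, ← G.ax3, G.ax1, G.r_one, G.inv_r]

/-- In a digroup `(G,1)`, the operations ⊢ and ⊣ coincide on the group part
`J = {a ⊢ 1 : a ∈ G}`, and `(J, ⊢)` is a group with identity `1`. -/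
theorem groupPart_isGroup {D : Type} (G : DigroupStruct D) :
    (∀ a ∈ groupPart G, ∀ b ∈ groupPart G, G.l a b = G.r a b) ∧
    G.one ∈ groupPart G ∧
    (∀ a ∈ groupPart G, ∀ b ∈ groupPart G, G.l a b ∈ groupPart G) ∧
    (∀ a ∈ groupPart G, G.l G.one a = a ∧ G.l a G.one = a) ∧
    (∀ a ∈ groupPart G, ∃ b ∈ groupPart G, G.l a b = G.one ∧ G.l b a = G.one) := by
  refine ⟨?_, ⟨G.one, (G.one_l G.one).symm⟩, ?_, ?_, ?_⟩
  · rintro a ⟨x, rfl⟩ b ⟨y, rfl⟩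
    rw [digroup_lA, ← digroup_rB G y, G.ax3, digroup_rB]
  · rintro a ⟨x, rfl⟩ b ⟨y, rfl⟩
    exact ⟨G.l x y, by rw [digroup_lA, ← G.l_assoc]⟩
  · rintro a ⟨x, rfl⟩
    exact ⟨G.one_l _, by rw [G.l_assoc, G.one_l]⟩
  · rintro a ⟨x, rfl⟩
    refine ⟨G.l (G.inv x) G.one, ⟨_, rfl⟩, ?_, ?_⟩
    · rw [digroup_lA, ← G.l_assoc, G.l_inv, G.one_l]
    · rw [digroup_lA, ← G.l_assoc, ← G.ax2, G.inv_r, G.one_l]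
end

section
/- In a digroup (G,1) with group part J = {a ⊢ 1 : a ∈ G} and halo E = {e ∈ G : e ⊢ a = a ⊣ e = a for all a ∈ G}, the map G → E × J sending each element to its halo and group components is a bijection, and under this bijection the operations correspond to (u,h) ⊢ (v,k) = (h ⊢ v ⊣ h⁻¹, h ⊢ k) and (u,h) ⊣ (v,k) = (u, h ⊣ k); that is, (G,1) is isomorphic as a digroup to (E × J, (1,1)) with these operations. -/
namespace DigroupAux

variable {D : Type} (G : DigroupStruct D)

/-- The halo component of `a`: `a ⊣ ((a ⊢ 1)⁻¹ ⊢ 1)`. -/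
def eh (a : D) : D := G.r a (G.l (G.inv (G.l a G.one)) G.one)

lemma l4 (a b : D) : G.l (G.l a G.one) b = G.l a b := by
  rw [← G.ax2, G.r_one]

lemma l5 (a b : D) : G.r a (G.l b G.one) = G.r a b := by
  rw [G.ax1, G.r_one]

lemma l7b (a : D) : G.l a (G.inv (G.l a G.one)) = G.one := by
  have h := G.l_inv (G.l a G.one)
  rwa [l4] at h

lemma l6 (a : D) : G.r G.one (G.l a G.one) = G.l a G.one := by
  calc G.r G.one (G.l a G.one)
      = G.r (G.l a (G.inv a)) (G.l a G.one) := by rw [G.l_inv]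
    _ = G.l a (G.r (G.inv a) (G.l a G.one)) := (G.ax3 _ _ _).symm
    _ = G.l a G.one := by rw [G.ax1, G.r_one, G.inv_r]

lemma J_rl (a b : D) :
    G.r (G.l a G.one) (G.l b G.one) = G.l (G.l a G.one) (G.l b G.one) := by
  calc G.r (G.l a G.one) (G.l b G.one)
      = G.l a (G.r G.one (G.l b G.one)) := (G.ax3 _ _ _).symm
    _ = G.l a (G.l b G.one) := by rw [l6]
    _ = G.l (G.l a G.one) (G.l b G.one) := (l4 G _ _).symm

lemma linv_l (a b : D) : G.l (G.inv a) (G.l a b) = b := by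
  rw [← G.l_assoc, ← G.ax2, G.inv_r, G.one_l]

lemma la_q (a : D) : G.l a (G.l (G.inv (G.l a G.one)) G.one) = G.one := by
  rw [← G.l_assoc, l7b, G.one_l]

lemma e_mem (a : D) : eh G a ∈ halo G := by
  intro x
  constructor
  · show G.l (G.r a _) x = x
    rw [G.ax2, la_q, G.one_l]
  · show G.r x (G.r a _) = x
    rw [← G.ax1, la_q, G.r_one]

lemma linv_h (a : D) : G.l (G.inv (G.l a G.one)) (G.l a G.one) = G.one := by
  calc G.l (G.inv (G.l a G.one)) (G.l a G.one)
      = G.l (G.inv (G.l a G.one)) (G.l (G.l a G.one) G.one) := by rw [l4]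
    _ = G.one := by rw [← G.l_assoc, ← G.ax2, G.inv_r, G.one_l]

lemma eh_r (a : D) : G.r (eh G a) (G.l a G.one) = a := by
  unfold eh
  rw [G.r_assoc, J_rl, l4, linv_h, G.r_one]

lemma h_r_q (b : D) :
    G.r (G.l b G.one) (G.l (G.inv (G.l b G.one)) G.one) = G.one := by
  rw [J_rl, l4, la_q]

lemma lone_r_halo (u : D) (hu : u ∈ halo G) (b : D) :
    G.l (G.r u (G.l b G.one)) G.one = G.l b G.one := by
  rw [G.ax2, G.l_assoc u (G.l b G.one) G.one, l4 G b G.one, (hu (G.l b G.one)).1]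

lemma eh_r_halo (u : D) (hu : u ∈ halo G) (b : D) :
    eh G (G.r u (G.l b G.one)) = u := by
  unfold eh
  rw [lone_r_halo G u hu b, G.r_assoc, h_r_q, G.r_one]

lemma key_lone (a b v : D) (hv : v ∈ halo G) :
    G.l (G.r (G.l (G.l a G.one) v) (G.l b G.one)) G.one
      = G.l (G.l a G.one) (G.l b G.one) := by
  rw [G.ax2, G.l_assoc (G.l (G.l a G.one) v) (G.l b G.one) G.one, l4 G b G.one,
    G.l_assoc (G.l a G.one) v (G.l b G.one), (hv (G.l b G.one)).1]

lemma key_eh (a b v : D) (hv : v ∈ halo G) :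
    eh G (G.r (G.l (G.l a G.one) v) (G.l b G.one))
      = G.r (G.l (G.l a G.one) v) (G.l (G.inv (G.l a G.one)) G.one) := by
  unfold eh
  rw [key_lone G a b v hv, G.r_assoc]
  congr 1
  -- ⊢ r (l b one) (l (inv (l (l a one) (l b one))) one) = l (inv (l a one)) one
  have hkg : G.l (G.l b G.one) (G.inv (G.l (G.l a G.one) (G.l b G.one)))
      = G.l (G.inv (G.l a G.one)) G.one := by
    conv_lhs =>
      rw [← linv_l G (G.l a G.one)
        (G.l (G.l b G.one) (G.inv (G.l (G.l a G.one) (G.l b G.one))))]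
    rw [← G.l_assoc (G.l a G.one) (G.l b G.one)
      (G.inv (G.l (G.l a G.one) (G.l b G.one))), G.l_inv]
  rw [J_rl, ← G.l_assoc, hkg, l4]

end DigroupAux

/-- Kinyon's theorem: a digroup `(G,1)` is isomorphic to `(E × J, (1,1))`,
where `E` is the halo and `J` the group part, the second component of the
isomorphism being `a ↦ a ⊢ 1`, and the operations correspond to
`(u,h) ⊢ (v,k) = (h ⊢ v ⊣ h⁻¹, h ⊢ k)` and `(u,h) ⊣ (v,k) = (u, h ⊣ k)`. -/
theorem digroup_iso_halo_prod_groupPart {D : Type} (G : DigroupStruct D) :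
    ∃ Φ : D ≃ (↥(halo G) × ↥(groupPart G)),
      ((Φ G.one).1.val = G.one ∧ (Φ G.one).2.val = G.one) ∧
      (∀ a, (Φ a).2.val = G.l a G.one) ∧
      (∀ a b,
        (Φ (G.l a b)).1.val
          = G.r (G.l ((Φ a).2.val) ((Φ b).1.val)) (G.l (G.inv ((Φ a).2.val)) G.one) ∧
        (Φ (G.l a b)).2.val = G.l ((Φ a).2.val) ((Φ b).2.val) ∧
        (Φ (G.r a b)).1.val = (Φ a).1.val ∧
        (Φ (G.r a b)).2.val = G.r ((Φ a).2.val) ((Φ b).2.val)) := by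
  open DigroupAux in
  refine ⟨⟨fun a => (⟨eh G a, e_mem G a⟩, ⟨G.l a G.one, a, rfl⟩),
      fun p => G.r p.1.val p.2.val, fun a => eh_r G a, ?_⟩, ⟨?_, ?_⟩, fun a => rfl, ?_⟩
  · rintro ⟨u, h⟩
    obtain ⟨b, hb⟩ := h.prop
    have h1 : G.l (G.r u.val h.val) G.one = h.val := by
      rw [hb]; exact lone_r_halo G u.val u.prop b
    have h2 : eh G (G.r u.val h.val) = u.val := by
      rw [hb]; exact eh_r_halo G u.val u.prop b
    exact Prod.ext (Subtype.ext h2) (Subtype.ext h1)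
  · show eh G G.one = G.one
    have h := eh_r G G.one
    rwa [G.one_l, G.r_one] at h
  · exact G.one_l G.one
  · intro a b
    refine ⟨?_, ?_, ?_, ?_⟩
    · show eh G (G.l a b)
        = G.r (G.l (G.l a G.one) (eh G b)) (G.l (G.inv (G.l a G.one)) G.one)
      have hab : G.l a b = G.r (G.l (G.l a G.one) (eh G b)) (G.l b G.one) := by
        calc G.l a b = G.l a (G.r (eh G b) (G.l b G.one)) := by rw [eh_r]
          _ = G.r (G.l a (eh G b)) (G.l b G.one) := G.ax3 _ _ _
          _ = G.r (G.l (G.l a G.one) (eh G b)) (G.l b G.one) := by rw [l4]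
      rw [hab]
      exact key_eh G a b _ (e_mem G b)
    · show G.l (G.l a b) G.one = G.l (G.l a G.one) (G.l b G.one)
      rw [l4, G.l_assoc]
    · show eh G (G.r a b) = eh G a
      have hrb : G.r a b = G.r (eh G a) (G.l (G.l a b) G.one) := by
        calc G.r a b = G.r a (G.l b G.one) := (l5 G a b).symm
          _ = G.r (G.r (eh G a) (G.l a G.one)) (G.l b G.one) := by rw [eh_r]
          _ = G.r (eh G a) (G.r (G.l a G.one) (G.l b G.one)) := G.r_assoc _ _ _
          _ = G.r (eh G a) (G.l (G.l a G.one) (G.l b G.one)) := by rw [J_rl]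
          _ = G.r (eh G a) (G.l a (G.l b G.one)) := by rw [l4]
          _ = G.r (eh G a) (G.l (G.l a b) G.one) := by rw [G.l_assoc]
      rw [hrb]
      exact eh_r_halo G _ (e_mem G a) (G.l a b)
    · show G.l (G.r a b) G.one = G.r (G.l a G.one) (G.l b G.one)
      rw [G.ax2, J_rl, l4, G.l_assoc]
end

section
/- Given a set X, let [X⁺]_ω = {[u]_m : u ∈ X⁺, 1 ≤ m ≤ |u|} with operations [u]_m ⊢ [v]_n = [uv]_{|u|+n} and [u]_m ⊣ [v]_n = [uv]_m. Then [X⁺]_ω is the free disemigroup on X: it is a disemigroup, and for every disemigroup D and map f : X → D there is a unique disemigroup homomorphism [X⁺]_ω → D extending f (where x corresponds to [x]_1). -/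
/-- The free disemigroup `[X⁺]_ω` on `X`: pairs `[u]_m` with `u` a nonempty word
and `1 ≤ m ≤ |u|`. -/
def FreeDi (X : Type) : Type :=
  {p : List X × ℕ // p.1 ≠ [] ∧ 1 ≤ p.2 ∧ p.2 ≤ p.1.length}

/-- `[u]_m ⊢ [v]_n = [uv]_{|u|+n}`. -/
def FreeDi.opL {X : Type} (a b : FreeDi X) : FreeDi X :=
  ⟨(a.val.1 ++ b.val.1, a.val.1.length + b.val.2), by
    obtain ⟨ha, ha1, ha2⟩ := a.property
    obtain ⟨hb, hb1, hb2⟩ := b.property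
    refine ⟨?_, by omega, ?_⟩
    · simp [List.append_eq_nil_iff, ha]
    · simp only [List.length_append]; omega⟩

/-- `[u]_m ⊣ [v]_n = [uv]_m`. -/
def FreeDi.opR {X : Type} (a b : FreeDi X) : FreeDi X :=
  ⟨(a.val.1 ++ b.val.1, a.val.2), by
    obtain ⟨ha, ha1, ha2⟩ := a.property
    obtain ⟨hb, hb1, hb2⟩ := b.property
    refine ⟨?_, by omega, ?_⟩
    · simp [List.append_eq_nil_iff, ha]
    · simp only [List.length_append]; omega⟩

/-- The generator `[x]₁`. -/
def FreeDi.single {X : Type} (x : X) : FreeDi X := ⟨([x], 1), by simp⟩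


/-!
Write `[x :: xs]_(k+1)` for an element of `[X⁺]_ω`. Peeling off the first letter gives
`[x :: y :: ys]_1 = [x]_1 ⊣ [y :: ys]_1` and `[x :: y :: ys]_(k+2) = [x]_1 ⊢ [y :: ys]_(k+1)`,
so the generators generate and a homomorphism is determined by its values on them.
Conversely, `[x₀ x₁ ⋯ xₙ]_(k+1)` is sent to the right-bracketed product
`x₀ ⊢ ⋯ ⊢ x_k ⊣ ⋯ ⊣ xₙ`; that this is multiplicative is an induction on the left factor,
using that the dialgebra axioms let every `⊢` to the right of a `⊣` be turned into a `⊣`.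
-/

namespace DisemigroupStruct

variable {D X : Type} (T : DisemigroupStruct D) (f : X → D)

/-- `T.wordProd f x [x₁, …, xₙ] k = f x ⊢ f x₁ ⊢ ⋯ ⊢ f x_k ⊣ ⋯ ⊣ f xₙ`, bracketed to the right. -/
def wordProd : X → List X → ℕ → D
  | x, [], _ => f x
  | x, y :: ys, 0 => T.r (f x) (wordProd y ys 0)
  | x, y :: ys, k + 1 => T.l (f x) (wordProd y ys k)

theorem r_wordProd_eq_r_wordProd_zero (a : D) (x : X) (xs : List X) (k : ℕ) :
    T.r a (T.wordProd f x xs k) = T.r a (T.wordProd f x xs 0) := by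
  induction xs generalizing a x k with
  | nil => rfl
  | cons y ys ih =>
    cases k with
    | zero => rfl
    | succ k =>
      calc T.r a (T.l (f x) (T.wordProd f y ys k))
          = T.r (T.r a (f x)) (T.wordProd f y ys k) := by rw [T.ax1, T.r_assoc]
        _ = T.r a (T.r (f x) (T.wordProd f y ys 0)) := by rw [ih, T.r_assoc]

theorem wordProd_append_cons_l (x y : X) (xs ys : List X) (k n : ℕ) :
    T.wordProd f x (xs ++ y :: ys) (xs.length + 1 + n) =
      T.l (T.wordProd f x xs k) (T.wordProd f y ys n) := by
  induction xs generalizing x k with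
  | nil => simp only [List.nil_append, List.length_nil, Nat.zero_add, Nat.add_comm 1 n]; rfl
  | cons z zs ih =>
    have hlen : (z :: zs).length + 1 + n = zs.length + 1 + n + 1 := by
      simp only [List.length_cons]; omega
    rw [List.cons_append, hlen]
    cases k with
    | zero => simp only [wordProd]; rw [ih z 0, T.ax2, T.l_assoc]
    | succ k => simp only [wordProd]; rw [ih z k, T.l_assoc]

theorem wordProd_append_cons_r (x y : X) (xs ys : List X) (k n : ℕ) (hk : k ≤ xs.length) :
    T.wordProd f x (xs ++ y :: ys) k = T.r (T.wordProd f x xs k) (T.wordProd f y ys n) := by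
  induction xs generalizing x k with
  | nil =>
    obtain rfl : k = 0 := Nat.le_zero.mp hk
    exact (T.r_wordProd_eq_r_wordProd_zero f _ y ys n).symm
  | cons z zs ih =>
    rw [List.cons_append]
    cases k with
    | zero => simp only [wordProd]; rw [ih z 0 (Nat.zero_le _), T.r_assoc]
    | succ k =>
      simp only [wordProd]
      rw [ih z k (by simpa using hk), T.ax3]

end DisemigroupStruct

namespace FreeDi

variable {X : Type}

/-- `mk x xs k` is `[x :: xs]_(k+1)`. -/
def mk (x : X) (xs : List X) (k : ℕ) (hk : k ≤ xs.length) : FreeDi X :=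
  ⟨(x :: xs, k + 1), by simp; omega⟩

@[elab_as_elim]
theorem mk_cases {motive : FreeDi X → Prop} (h : ∀ x xs k hk, motive (mk x xs k hk))
    (a : FreeDi X) : motive a := by
  obtain ⟨⟨_ | ⟨x, xs⟩, m⟩, hne, hm, hlen⟩ := a
  · exact absurd rfl hne
  · obtain ⟨k, rfl⟩ := Nat.exists_eq_add_of_le' hm
    exact h x xs k (by simpa using hlen)

theorem opL_mk (x y : X) (xs ys : List X) (k n : ℕ) (hk : k ≤ xs.length)
    (hn : n ≤ ys.length) :
    opL (mk x xs k hk) (mk y ys n hn) =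
      mk x (xs ++ y :: ys) (xs.length + 1 + n) (by simp; omega) :=
  Subtype.ext (by simp only [opL, mk, List.cons_append, List.length_cons]; ext <;> simp; omega)

theorem opR_mk (x y : X) (xs ys : List X) (k n : ℕ) (hk : k ≤ xs.length)
    (hn : n ≤ ys.length) :
    opR (mk x xs k hk) (mk y ys n hn) = mk x (xs ++ y :: ys) k (by simp; omega) :=
  Subtype.ext (by simp [opR, mk])

theorem single_eq_mk (x : X) : single x = mk x [] 0 le_rfl := rfl

theorem mk_cons_zero (x y : X) (ys : List X) (h : 0 ≤ (y :: ys).length) :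
    mk x (y :: ys) 0 h = opR (single x) (mk y ys 0 (Nat.zero_le _)) := by
  rw [single_eq_mk, opR_mk]; rfl

theorem mk_cons_succ (x y : X) (ys : List X) (k : ℕ) (h : k + 1 ≤ (y :: ys).length) :
    mk x (y :: ys) (k + 1) h = opL (single x) (mk y ys k (by simpa using h)) := by
  rw [single_eq_mk, opL_mk]; simp only [List.nil_append, List.length_nil, Nat.zero_add,
    Nat.add_comm 1 k]

def disemigroupStruct (X : Type) : DisemigroupStruct (FreeDi X) where
  l := opL
  r := opR
  l_assoc a b c := Subtype.ext (by simp [opL]; omega)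
  r_assoc a b c := Subtype.ext (by simp [opR])
  ax1 a b c := Subtype.ext (by simp [opR, opL])
  ax2 a b c := Subtype.ext (by simp [opR, opL])
  ax3 a b c := Subtype.ext (by simp [opR, opL])

theorem disemigroupStruct_l : (disemigroupStruct X).l = opL := rfl

theorem disemigroupStruct_r : (disemigroupStruct X).r = opR := rfl

theorem hom_ext {D : Type} {T : DisemigroupStruct D} {φ ψ : FreeDi X → D}
    (hφ : IsDisemigroupHom (disemigroupStruct X) T φ)
    (hψ : IsDisemigroupHom (disemigroupStruct X) T ψ)
    (h : ∀ x, φ (single x) = ψ (single x)) : φ = ψ := by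
  funext a
  induction a using mk_cases with
  | h x xs k hk =>
    induction xs generalizing x k with
    | nil =>
      obtain rfl : k = 0 := Nat.le_zero.mp hk
      exact h x
    | cons y ys ih =>
      cases k with
      | zero => rw [mk_cons_zero, ← disemigroupStruct_r, hφ.2, hψ.2, h, ih]
      | succ k => rw [mk_cons_succ, ← disemigroupStruct_l, hφ.1, hψ.1, h, ih]

variable {D : Type} (T : DisemigroupStruct D) (f : X → D)

def lift (a : FreeDi X) : D :=
  T.wordProd f (a.val.1.head a.property.1) a.val.1.tail (a.val.2 - 1)

theorem lift_mk (x : X) (xs : List X) (k : ℕ) (hk : k ≤ xs.length) :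
    lift T f (mk x xs k hk) = T.wordProd f x xs k := rfl

theorem lift_single (x : X) : lift T f (single x) = f x := rfl

theorem isDisemigroupHom_lift : IsDisemigroupHom (disemigroupStruct X) T (lift T f) := by
  constructor
  · intro a b
    induction a using mk_cases with | h x xs k hk =>
    induction b using mk_cases with | h y ys n hn =>
    rw [disemigroupStruct_l, opL_mk, lift_mk, lift_mk, lift_mk]
    exact T.wordProd_append_cons_l f x y xs ys k n
  · intro a b
    induction a using mk_cases with | h x xs k hk =>
    induction b using mk_cases with | h y ys n hn =>
    rw [disemigroupStruct_r, opR_mk, lift_mk, lift_mk, lift_mk]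
    exact T.wordProd_append_cons_r f x y xs ys k n hk

end FreeDi

/-- `[X⁺]_ω` with the operations `[u]_m ⊢ [v]_n = [uv]_{|u|+n}`,
`[u]_m ⊣ [v]_n = [uv]_m` is the free disemigroup on `X`. -/
theorem freeDi_is_free_disemigroup {X : Type} :
    ∃ S : DisemigroupStruct (FreeDi X),
      S.l = FreeDi.opL ∧ S.r = FreeDi.opR ∧
      ∀ {D : Type} (T : DisemigroupStruct D) (f : X → D),
        ∃! φ : FreeDi X → D,
          IsDisemigroupHom S T φ ∧ ∀ x, φ (FreeDi.single x) = f x := by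
  refine ⟨FreeDi.disemigroupStruct X, rfl, rfl, fun T f => ?_⟩
  refine ⟨FreeDi.lift T f, ⟨FreeDi.isDisemigroupHom_lift T f, FreeDi.lift_single T f⟩, ?_⟩
  rintro ψ ⟨hψ, hψf⟩
  exact FreeDi.hom_ext hψ (FreeDi.isDisemigroupHom_lift T f) fun x =>
    (hψf x).trans (FreeDi.lift_single T f x).symm
end

section
/- Let (Aᵢ,eᵢ) be digroups with group parts Jᵢ (i = 1,2), A = A₁ ∪ A₂, J = J₁ ∪ J₂. Define Ω = Ω₁ ∪ Ω₂ ⊆ [A⁺]_ω where Ω₁ = {[u]₁ : u ∈ J₁ * J₂} (reduced words of the free product of groups J₁, J₂) and Ω₂ = {[pxq]_{|p|+1} : p,q ∈ J*, x ∈ A \ J, pxq reduced}. With the operations ⊢ and ⊣ given by reduction and multiplication at the distinguished position (as in the theorem: [w]_n ⊢ [u]₁ = [(wu)^]₁, [u]₁ ⊣ [w]_n = [(uw)^]₁, and the three-case formulas for [w]_n ⊢ [pxq]_{|p|+1} and [pxq]_{|p|+1} ⊣ [w]_n), the pair (Ω, e₁) is a digroup. -/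
open scoped Classical

section OmegaConstruction

variable {D1 D2 : Type} (A1 : DigroupStruct D1) (A2 : DigroupStruct D2)

/-- `x` is the unit of its factor. -/
def unitL : D1 ⊕ D2 → Prop
  | Sum.inl a => a = A1.one
  | Sum.inr a => a = A2.one

/-- `x` lies in the group part of its factor. -/
def inJ : D1 ⊕ D2 → Prop
  | Sum.inl a => a ∈ groupPart A1
  | Sum.inr a => a ∈ groupPart A2

/-- Two letters lie in the same factor. -/
def sameF {D1 D2 : Type} (x y : D1 ⊕ D2) : Prop := x.isLeft = y.isLeft

/-- `x ↦ x^♯ = x ⊢ e` computed in its factor. -/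
def sharp : D1 ⊕ D2 → D1 ⊕ D2
  | Sum.inl a => Sum.inl (A1.l a A1.one)
  | Sum.inr a => Sum.inr (A2.l a A2.one)

/-- The letter map inducing `τ : A* → J*`: fixes `J` and sends `x ∉ J` to `x^♯`. -/
noncomputable def tauL (x : D1 ⊕ D2) : D1 ⊕ D2 :=
  if inJ A1 A2 x then x else sharp A1 A2 x

/-- Same-factor product `x ⊢ y` of letters (junk value on mixed factors). -/
def lmulL : D1 ⊕ D2 → D1 ⊕ D2 → D1 ⊕ D2
  | Sum.inl a, Sum.inl b => Sum.inl (A1.l a b)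
  | Sum.inr a, Sum.inr b => Sum.inr (A2.l a b)
  | x, _ => x

/-- Same-factor product `x ⊣ y` of letters (junk value on mixed factors). -/
def rmulL : D1 ⊕ D2 → D1 ⊕ D2 → D1 ⊕ D2
  | Sum.inl a, Sum.inl b => Sum.inl (A1.r a b)
  | Sum.inr a, Sum.inr b => Sum.inr (A2.r a b)
  | x, _ => x

/-- Push one letter onto a reduced word of the free product of groups `J₁ * J₂`
(the empty list representing the identity). -/
noncomputable def push (acc : List (D1 ⊕ D2)) (x : D1 ⊕ D2) : List (D1 ⊕ D2) :=
  if unitL A1 A2 x then acc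
  else
    match acc.getLast? with
    | none => [x]
    | some y =>
      if sameF y x then
        if unitL A1 A2 (lmulL A1 A2 y x) then acc.dropLast
        else acc.dropLast ++ [lmulL A1 A2 y x]
      else acc ++ [x]

/-- Reduction of a word of `J`-letters to the reduced word of `J₁ * J₂`. -/
noncomputable def reduceW (w : List (D1 ⊕ D2)) : List (D1 ⊕ D2) :=
  w.foldl (push A1 A2) []

/-- `ŵ`: the reduced word of `τ(w)` in `J₁ * J₂`. -/
noncomputable def hatW (w : List (D1 ⊕ D2)) : List (D1 ⊕ D2) :=
  reduceW A1 A2 (w.map (tauL A1 A2))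

/-- Convert the empty reduced word to its representative `e₁`. -/
noncomputable def toRep (w : List (D1 ⊕ D2)) : List (D1 ⊕ D2) :=
  if w = [] then [Sum.inl A1.one] else w

/-- A reduced word on `A₁ ∪ A₂°`: no units, and successive letters lie in
different factors. -/
def AltRed (u : List (D1 ⊕ D2)) : Prop :=
  (∀ c ∈ u, ¬ unitL A1 A2 c) ∧ List.Chain' (fun a b => ¬ sameF a b) u

/-- Membership in `Ω = Ω₁ ∪ Ω₂`. -/
def InOmega (z : List (D1 ⊕ D2) × ℕ) : Prop :=
  (z.2 = 1 ∧ (z.1 = [Sum.inl A1.one] ∨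
    (z.1 ≠ [] ∧ AltRed A1 A2 z.1 ∧ ∀ c ∈ z.1, inJ A1 A2 c))) ∨
  (∃ p x q, z.1 = p ++ x :: q ∧ z.2 = p.length + 1 ∧ ¬ inJ A1 A2 x ∧
    (∀ c ∈ p, inJ A1 A2 c) ∧ (∀ c ∈ q, inJ A1 A2 c) ∧ AltRed A1 A2 z.1)

/-- The carrier `Ω = Ω₁ ∪ Ω₂` of the free product of the digroups `A₁`, `A₂`. -/
def Omega : Type := {z : List (D1 ⊕ D2) × ℕ // InOmega A1 A2 z}

/-- The operation `⊢` of `Ω`, on representatives. -/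
noncomputable def opLspec (z z' : List (D1 ⊕ D2) × ℕ) : List (D1 ⊕ D2) × ℕ :=
  @ite _ (z'.2 = 1 ∧ ∀ c ∈ z'.1, inJ A1 A2 c) (Classical.propDecidable _)
    -- second operand is `[u]₁ ∈ Ω₁`:  `[w]_n ⊢ [u]₁ = [(wu)^]₁`
    ((toRep A1 (hatW A1 A2 (z.1 ++ z'.1)), 1))
    (
    -- second operand is `[pxq]_{|p|+1} ∈ Ω₂`
    let p := z'.1.take (z'.2 - 1)
    let x := z'.1.getD (z'.2 - 1) (Sum.inl A1.one)
    let q := z'.1.drop z'.2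
    let r := hatW A1 A2 (z.1 ++ p)
    match r.getLast? with
    | none => (x :: q, 1)  -- `(wp)^ = e₁`
    | some c =>
      if sameF c x then
        -- `(wp)^ = vc` with `c` in the same factor as `x`
        (r.dropLast ++ lmulL A1 A2 c x :: q, r.dropLast.length + 1)
      else (r ++ x :: q, r.length + 1))

/-- The operation `⊣` of `Ω`, on representatives. -/
noncomputable def opRspec (z z' : List (D1 ⊕ D2) × ℕ) : List (D1 ⊕ D2) × ℕ :=
  @ite _ (z.2 = 1 ∧ ∀ c ∈ z.1, inJ A1 A2 c) (Classical.propDecidable _)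
    -- first operand is `[u]₁ ∈ Ω₁`:  `[u]₁ ⊣ [w]_n = [(uw)^]₁`
    ((toRep A1 (hatW A1 A2 (z.1 ++ z'.1)), 1))
    (
    -- first operand is `[pxq]_{|p|+1} ∈ Ω₂`
    let p := z.1.take (z.2 - 1)
    let x := z.1.getD (z.2 - 1) (Sum.inl A1.one)
    let q := z.1.drop z.2
    let r := hatW A1 A2 (q ++ z'.1)
    match r with
    | [] => (p ++ [x], p.length + 1)  -- `(qw)^ = e₁`
    | c :: v =>
      if sameF x c then
        -- `(qw)^ = cv` with `c` in the same factor as `x`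
        (p ++ rmulL A1 A2 x c :: v, p.length + 1)
      else (p ++ x :: c :: v, p.length + 1))

end OmegaConstruction

/-!
Every word `w` has a reduced form `ŵ` in the free product of groups `J₁ * J₂`, and `w ↦ ŵ` is
multiplicative. The product `u v` of reduced words is `v.foldl (push A1 A2) u`; it is associative
because `push (push B x) y = push B (x ⊢ y)` for letters `x, y` of one factor.

Under `z ↦ ẑ` both `⊢` and `⊣` of `Ω` become this product, and an element `[u]₁` of `Ω₁` is
determined by `û`; this settles every axiom whose relevant operand lies in `Ω₁`. On
`[p x q]_{|p|+1} ∈ Ω₂`, `w ⊢ -` changes only the part left of `x` and may absorb a letter of its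
factor into `x` by `⊢`, while `- ⊣ w` changes only the part right of `x` and absorbs by `⊣`. The
remaining axioms thus reduce to associativity in `J₁ * J₂` and to the identities
`c ⊢ (x ⊣ d) = (c ⊢ x) ⊣ d`, `(c ⊢ c') ⊢ x = c ⊢ (c' ⊢ x)` and `(x ⊣ c) ⊣ d = x ⊣ (c ⊢ d)`
(`c, c', d ∈ J`) in each factor.
-/

namespace DigroupStruct

variable {X : Type} (G : DigroupStruct X)

theorem one_mem_groupPart : G.one ∈ groupPart G := ⟨G.one, (G.one_l G.one).symm⟩

theorem l_one_of_mem {a : X} (ha : a ∈ groupPart G) : G.l a G.one = a := by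
  obtain ⟨b, rfl⟩ := ha
  rw [G.l_assoc, G.one_l]

theorem l_mem_groupPart (a : X) {b : X} (hb : b ∈ groupPart G) : G.l a b ∈ groupPart G := by
  obtain ⟨c, rfl⟩ := hb
  exact ⟨G.l a c, (G.l_assoc a c G.one).symm⟩

/-- The inverse of `a` in the group `(J, ⊢)`. -/
def jinv (a : X) : X := G.l (G.inv a) G.one

theorem jinv_mem_groupPart (a : X) : G.jinv a ∈ groupPart G := ⟨G.inv a, rfl⟩

theorem l_jinv (a : X) : G.l a (G.jinv a) = G.one := by
  rw [jinv, ← G.l_assoc, G.l_inv, G.one_l]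

theorem jinv_l {a : X} (ha : a ∈ groupPart G) : G.l (G.jinv a) a = G.one := by
  set b := G.jinv a
  calc G.l b a = G.l b (G.l a (G.l b (G.jinv b))) := by rw [l_jinv, G.l_one_of_mem ha]
    _ = G.l (G.l b (G.l a b)) (G.jinv b) := by rw [G.l_assoc, G.l_assoc]
    _ = G.one := by rw [l_jinv, G.l_one_of_mem (G.jinv_mem_groupPart a), l_jinv]

theorem jinv_ne_one {a : X} (ha : a ∈ groupPart G) (h : a ≠ G.one) : G.jinv a ≠ G.one := by
  intro he
  have := G.l_jinv a
  rw [he, G.l_one_of_mem ha] at this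
  exact h this

theorem one_r_of_mem {b : X} (hb : b ∈ groupPart G) : G.r G.one b = b := by
  have h := G.ax3 b (G.inv b) b
  rw [G.l_inv, G.inv_r] at h
  rw [← h, G.l_one_of_mem hb]

theorem r_eq_l_of_mem {a b : X} (ha : a ∈ groupPart G) (hb : b ∈ groupPart G) :
    G.r a b = G.l a b := by
  conv_lhs => rw [← G.l_one_of_mem ha]
  rw [← G.ax3, G.one_r_of_mem hb]

theorem r_mem_groupPart {a b : X} (ha : a ∈ groupPart G) (hb : b ∈ groupPart G) :
    G.r a b ∈ groupPart G := by
  rw [G.r_eq_l_of_mem ha hb]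
  exact G.l_mem_groupPart a hb

theorem l_not_mem {c x : X} (hc : c ∈ groupPart G) (hx : x ∉ groupPart G) :
    G.l c x ∉ groupPart G := by
  intro hcx
  rw [← G.one_l x, ← G.jinv_l hc, G.l_assoc] at hx
  exact hx (G.l_mem_groupPart _ hcx)

theorem r_not_mem {x c : X} (hx : x ∉ groupPart G) (hc : c ∈ groupPart G) :
    G.r x c ∉ groupPart G := by
  intro hxc
  have hc' : G.r c (G.jinv c) = G.one := by
    rw [G.r_eq_l_of_mem hc (G.jinv_mem_groupPart c), l_jinv]
  rw [← G.r_one x, ← hc', ← G.r_assoc] at hx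
  exact hx (G.r_mem_groupPart hxc (G.jinv_mem_groupPart c))

theorem r_r_of_mem (x : X) {c d : X} (hc : c ∈ groupPart G) (hd : d ∈ groupPart G) :
    G.r (G.r x c) d = G.r x (G.l c d) := by
  rw [G.r_assoc, G.r_eq_l_of_mem hc hd]

theorem r_l_one (x : X) {c : X} (hc : c ∈ groupPart G) :
    G.l (G.r x c) G.one = G.l (G.l x G.one) c := by
  rw [G.ax2, G.l_assoc, G.l_assoc, G.one_l, G.l_one_of_mem hc]

end DigroupStruct

section Letters

variable {D1 D2 : Type} (A1 : DigroupStruct D1) (A2 : DigroupStruct D2)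

def unitOf : D1 ⊕ D2 → D1 ⊕ D2
  | Sum.inl _ => Sum.inl A1.one
  | Sum.inr _ => Sum.inr A2.one

noncomputable def jinvL : D1 ⊕ D2 → D1 ⊕ D2
  | Sum.inl a => Sum.inl (A1.jinv a)
  | Sum.inr a => Sum.inr (A2.jinv a)

variable {A1 A2}

theorem sameF_unitOf (x : D1 ⊕ D2) : sameF (unitOf A1 A2 x) x := by
  cases x <;> rfl

theorem sameF_tauL (x : D1 ⊕ D2) : sameF (tauL A1 A2 x) x := by
  unfold tauL
  split
  · rfl
  · cases x <;> rfl

theorem sameF_lmulL (x y : D1 ⊕ D2) : sameF (lmulL A1 A2 x y) x := by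
  cases x <;> cases y <;> rfl

theorem sameF_rmulL (x y : D1 ⊕ D2) : sameF (rmulL A1 A2 x y) x := by
  cases x <;> cases y <;> rfl

theorem sameF_jinvL (x : D1 ⊕ D2) : sameF (jinvL A1 A2 x) x := by
  cases x <;> rfl

theorem unitL_unitOf (x : D1 ⊕ D2) : unitL A1 A2 (unitOf A1 A2 x) := by
  cases x <;> rfl

theorem inJ_of_unitL {x : D1 ⊕ D2} (h : unitL A1 A2 x) : inJ A1 A2 x := by
  cases x <;> simp only [unitL] at h <;> subst h
  exacts [A1.one_mem_groupPart, A2.one_mem_groupPart]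

theorem not_unitL_of_not_inJ {x : D1 ⊕ D2} (h : ¬ inJ A1 A2 x) : ¬ unitL A1 A2 x :=
  mt inJ_of_unitL h

theorem tauL_of_inJ {x : D1 ⊕ D2} (h : inJ A1 A2 x) : tauL A1 A2 x = x := if_pos h

theorem inJ_tauL (x : D1 ⊕ D2) : inJ A1 A2 (tauL A1 A2 x) := by
  unfold tauL
  split
  · assumption
  · cases x with
    | inl a => exact ⟨a, rfl⟩
    | inr a => exact ⟨a, rfl⟩

theorem lmulL_assoc {x y z : D1 ⊕ D2} (hxy : sameF x y) (hyz : sameF y z) :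
    lmulL A1 A2 (lmulL A1 A2 x y) z = lmulL A1 A2 x (lmulL A1 A2 y z) := by
  cases x <;> cases y <;> cases z <;> cases hxy <;> cases hyz <;> simp only [lmulL]
  exacts [congrArg _ (A1.l_assoc _ _ _), congrArg _ (A2.l_assoc _ _ _)]

theorem lmulL_of_unitL_left {x y : D1 ⊕ D2} (hx : unitL A1 A2 x) (h : sameF x y) :
    lmulL A1 A2 x y = y := by
  cases x <;> cases y <;> cases h <;> cases hx <;> simp only [lmulL]
  exacts [congrArg _ (A1.one_l _), congrArg _ (A2.one_l _)]

theorem lmulL_of_unitL_right {x y : D1 ⊕ D2} (hy : unitL A1 A2 y) (h : sameF x y)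
    (hx : inJ A1 A2 x) : lmulL A1 A2 x y = x := by
  cases x <;> cases y <;> cases h <;> cases hy <;> simp only [lmulL]
  exacts [congrArg _ (A1.l_one_of_mem hx), congrArg _ (A2.l_one_of_mem hx)]

theorem rmulL_of_unitL_right {x y : D1 ⊕ D2} (hy : unitL A1 A2 y) (h : sameF x y) :
    rmulL A1 A2 x y = x := by
  cases x <;> cases y <;> cases h <;> cases hy <;> simp only [rmulL]
  exacts [congrArg _ (A1.r_one _), congrArg _ (A2.r_one _)]

theorem inJ_lmulL {x y : D1 ⊕ D2} (hy : inJ A1 A2 y) (h : sameF x y) :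
    inJ A1 A2 (lmulL A1 A2 x y) := by
  cases x <;> cases y <;> cases h <;> simp only [lmulL, inJ] at hy ⊢
  exacts [A1.l_mem_groupPart _ hy, A2.l_mem_groupPart _ hy]

theorem not_inJ_lmulL {c x : D1 ⊕ D2} (hc : inJ A1 A2 c) (hx : ¬ inJ A1 A2 x)
    (h : sameF c x) : ¬ inJ A1 A2 (lmulL A1 A2 c x) := by
  cases c <;> cases x <;> cases h <;> simp only [lmulL, inJ] at hc hx ⊢
  exacts [A1.l_not_mem hc hx, A2.l_not_mem hc hx]

theorem not_inJ_rmulL {x c : D1 ⊕ D2} (hx : ¬ inJ A1 A2 x) (hc : inJ A1 A2 c)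
    (h : sameF x c) : ¬ inJ A1 A2 (rmulL A1 A2 x c) := by
  cases x <;> cases c <;> cases h <;> simp only [rmulL, inJ] at hc hx ⊢
  exacts [A1.r_not_mem hx hc, A2.r_not_mem hx hc]

theorem tauL_lmulL {c x : D1 ⊕ D2} (hc : inJ A1 A2 c) (h : sameF c x) :
    tauL A1 A2 (lmulL A1 A2 c x) = lmulL A1 A2 c (tauL A1 A2 x) := by
  by_cases hx : inJ A1 A2 x
  · rw [tauL_of_inJ hx, tauL_of_inJ (inJ_lmulL hx h)]
  · rw [tauL, if_neg (not_inJ_lmulL hc hx h), tauL, if_neg hx]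
    cases c <;> cases x <;> cases h <;> simp only [lmulL, sharp]
    exacts [congrArg _ (A1.l_assoc _ _ _), congrArg _ (A2.l_assoc _ _ _)]

theorem tauL_rmulL {x c : D1 ⊕ D2} (hc : inJ A1 A2 c) (h : sameF x c) :
    tauL A1 A2 (rmulL A1 A2 x c) = lmulL A1 A2 (tauL A1 A2 x) c := by
  by_cases hx : inJ A1 A2 x
  · have hxc : rmulL A1 A2 x c = lmulL A1 A2 x c := by
      cases x <;> cases c <;> cases h <;> simp only [rmulL, lmulL, inJ] at hx hc ⊢
      exacts [congrArg _ (A1.r_eq_l_of_mem hx hc), congrArg _ (A2.r_eq_l_of_mem hx hc)]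
    rw [tauL_of_inJ hx, hxc, tauL_of_inJ (inJ_lmulL hc h)]
  · rw [tauL, if_neg (not_inJ_rmulL hx hc h), tauL, if_neg hx]
    cases x <;> cases c <;> cases h <;> simp only [rmulL, lmulL, sharp, inJ] at hc ⊢
    exacts [congrArg _ (A1.r_l_one _ hc), congrArg _ (A2.r_l_one _ hc)]

theorem rmulL_rmulL {x c d : D1 ⊕ D2} (hc : inJ A1 A2 c) (hd : inJ A1 A2 d)
    (hxc : sameF x c) (hcd : sameF c d) :
    rmulL A1 A2 (rmulL A1 A2 x c) d = rmulL A1 A2 x (lmulL A1 A2 c d) := by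
  cases x <;> cases c <;> cases d <;> cases hxc <;> cases hcd <;>
    simp only [rmulL, lmulL, inJ] at hc hd ⊢
  exacts [congrArg _ (A1.r_r_of_mem _ hc hd), congrArg _ (A2.r_r_of_mem _ hc hd)]

theorem lmulL_rmulL {c x d : D1 ⊕ D2} (hcx : sameF c x) (hxd : sameF x d) :
    lmulL A1 A2 c (rmulL A1 A2 x d) = rmulL A1 A2 (lmulL A1 A2 c x) d := by
  cases c <;> cases x <;> cases d <;> cases hcx <;> cases hxd <;> simp only [lmulL, rmulL]
  exacts [congrArg _ (A1.ax3 _ _ _), congrArg _ (A2.ax3 _ _ _)]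

theorem inJ_jinvL (x : D1 ⊕ D2) : inJ A1 A2 (jinvL A1 A2 x) := by
  cases x
  exacts [A1.jinv_mem_groupPart _, A2.jinv_mem_groupPart _]

theorem not_unitL_jinvL {x : D1 ⊕ D2} (hx : inJ A1 A2 x) (h : ¬ unitL A1 A2 x) :
    ¬ unitL A1 A2 (jinvL A1 A2 x) := by
  cases x
  exacts [A1.jinv_ne_one hx h, A2.jinv_ne_one hx h]

theorem unitL_lmulL_jinvL (x : D1 ⊕ D2) : unitL A1 A2 (lmulL A1 A2 x (jinvL A1 A2 x)) := by
  cases x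
  exacts [A1.l_jinv _, A2.l_jinv _]

theorem unitL_jinvL_lmulL {x : D1 ⊕ D2} (hx : inJ A1 A2 x) :
    unitL A1 A2 (lmulL A1 A2 (jinvL A1 A2 x) x) := by
  cases x
  exacts [A1.jinv_l hx, A2.jinv_l hx]

end Letters

section ReducedWords

variable {D1 D2 : Type} (A1 : DigroupStruct D1) (A2 : DigroupStruct D2)

/-- Reduced words of the free product of groups `J₁ * J₂`. -/
def IsReducedJ (w : List (D1 ⊕ D2)) : Prop :=
  (∀ c ∈ w, inJ A1 A2 c ∧ ¬ unitL A1 A2 c) ∧ w.IsChain (fun a b => ¬ sameF a b)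

noncomputable def attachLast (B : List (D1 ⊕ D2)) (c : D1 ⊕ D2) : List (D1 ⊕ D2) :=
  if unitL A1 A2 c then B else B ++ [c]

noncomputable def attachHead (c : D1 ⊕ D2) (u : List (D1 ⊕ D2)) : List (D1 ⊕ D2) :=
  if unitL A1 A2 c then u else c :: u

variable {A1 A2}

def ApartLast (B : List (D1 ⊕ D2)) (x : D1 ⊕ D2) : Prop := ∀ d ∈ B.getLast?, ¬ sameF d x

def ApartHead (x : D1 ⊕ D2) (u : List (D1 ⊕ D2)) : Prop := ∀ d ∈ u.head?, ¬ sameF x d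

theorem ApartLast.of_sameF {B : List (D1 ⊕ D2)} {x y : D1 ⊕ D2} (h : ApartLast B x)
    (hxy : sameF x y) : ApartLast B y :=
  fun d hd hdy => h d hd (hdy.trans hxy.symm)

theorem ApartHead.of_sameF {u : List (D1 ⊕ D2)} {x y : D1 ⊕ D2} (h : ApartHead x u)
    (hxy : sameF x y) : ApartHead y u :=
  fun d hd hyd => h d hd (hxy.trans hyd)

theorem apartLast_nil (x : D1 ⊕ D2) : ApartLast [] x := by simp [ApartLast]

theorem apartHead_nil (x : D1 ⊕ D2) : ApartHead x [] := by simp [ApartHead]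

theorem apartLast_concat {B : List (D1 ⊕ D2)} {c x : D1 ⊕ D2} :
    ApartLast (B ++ [c]) x ↔ ¬ sameF c x := by
  simp [ApartLast]

theorem apartHead_cons {u : List (D1 ⊕ D2)} {c x : D1 ⊕ D2} :
    ApartHead x (c :: u) ↔ ¬ sameF x c := by
  simp [ApartHead]

theorem isReducedJ_append {u v : List (D1 ⊕ D2)} :
    IsReducedJ A1 A2 (u ++ v) ↔ IsReducedJ A1 A2 u ∧ IsReducedJ A1 A2 v ∧
      ∀ x ∈ u.getLast?, ApartHead x v := by
  simp only [IsReducedJ, List.mem_append, or_imp, forall_and, List.isChain_append, ApartHead]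
  tauto

theorem isReducedJ_nil : IsReducedJ A1 A2 ([] : List (D1 ⊕ D2)) := ⟨by simp, .nil⟩

theorem isReducedJ_singleton {c : D1 ⊕ D2} :
    IsReducedJ A1 A2 [c] ↔ inJ A1 A2 c ∧ ¬ unitL A1 A2 c := by
  simp [IsReducedJ]

theorem isReducedJ_concat {B : List (D1 ⊕ D2)} {c : D1 ⊕ D2} :
    IsReducedJ A1 A2 (B ++ [c]) ↔
      IsReducedJ A1 A2 B ∧ inJ A1 A2 c ∧ ¬ unitL A1 A2 c ∧ ApartLast B c := by
  simp [isReducedJ_append, isReducedJ_singleton, ApartHead, ApartLast, and_assoc]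

theorem isReducedJ_cons {c : D1 ⊕ D2} {u : List (D1 ⊕ D2)} :
    IsReducedJ A1 A2 (c :: u) ↔
      inJ A1 A2 c ∧ ¬ unitL A1 A2 c ∧ ApartHead c u ∧ IsReducedJ A1 A2 u := by
  rw [← List.singleton_append, isReducedJ_append, isReducedJ_singleton]
  simp only [List.getLast?_singleton, Option.mem_def, Option.some.injEq, forall_eq']
  tauto

theorem IsReducedJ.forall_inJ {w : List (D1 ⊕ D2)} (h : IsReducedJ A1 A2 w) :
    ∀ c ∈ w, inJ A1 A2 c :=
  fun c hc => (h.1 c hc).1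

theorem isReducedJ_attachLast {B : List (D1 ⊕ D2)} {c : D1 ⊕ D2} (hB : IsReducedJ A1 A2 B)
    (hc : inJ A1 A2 c) (hBc : ApartLast B c) : IsReducedJ A1 A2 (attachLast A1 A2 B c) := by
  unfold attachLast
  split_ifs with hu
  exacts [hB, isReducedJ_concat.2 ⟨hB, hc, hu, hBc⟩]

theorem isReducedJ_attachHead {c : D1 ⊕ D2} {u : List (D1 ⊕ D2)} (hu : IsReducedJ A1 A2 u)
    (hc : inJ A1 A2 c) (hcu : ApartHead c u) : IsReducedJ A1 A2 (attachHead A1 A2 c u) := by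
  unfold attachHead
  split_ifs with h
  exacts [hu, isReducedJ_cons.2 ⟨hc, h, hcu, hu⟩]

theorem attachLast_of_not_unitL (B : List (D1 ⊕ D2)) {c : D1 ⊕ D2} (hc : ¬ unitL A1 A2 c) :
    attachLast A1 A2 B c = B ++ [c] := if_neg hc

theorem attachHead_of_not_unitL {c : D1 ⊕ D2} (u : List (D1 ⊕ D2)) (hc : ¬ unitL A1 A2 c) :
    attachHead A1 A2 c u = c :: u := if_neg hc

theorem attachLast_unitOf (B : List (D1 ⊕ D2)) (x : D1 ⊕ D2) :
    attachLast A1 A2 B (unitOf A1 A2 x) = B := if_pos (unitL_unitOf x)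

theorem attachHead_unitOf (x : D1 ⊕ D2) (u : List (D1 ⊕ D2)) :
    attachHead A1 A2 (unitOf A1 A2 x) u = u := if_pos (unitL_unitOf x)

/-- A reduced word not ending in the factor of `x` is read as ending in the unit of that factor,
so that the reduction needs no case split on the last letter. -/
theorem IsReducedJ.exists_eq_attachLast {B : List (D1 ⊕ D2)} (hB : IsReducedJ A1 A2 B)
    (x : D1 ⊕ D2) : ∃ B₀ c, B = attachLast A1 A2 B₀ c ∧ IsReducedJ A1 A2 B₀ ∧
      inJ A1 A2 c ∧ sameF c x ∧ ApartLast B₀ x := by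
  have hunit : ∀ B₀, IsReducedJ A1 A2 B₀ → ApartLast B₀ x → ∃ B₁ c,
      B₀ = attachLast A1 A2 B₁ c ∧ IsReducedJ A1 A2 B₁ ∧ inJ A1 A2 c ∧ sameF c x ∧
        ApartLast B₁ x :=
    fun B₀ hB₀ hx => ⟨B₀, unitOf A1 A2 x, (attachLast_unitOf B₀ x).symm, hB₀,
      inJ_of_unitL (unitL_unitOf x), sameF_unitOf x, hx⟩
  rcases B.eq_nil_or_concat' with rfl | ⟨B₀, c, rfl⟩
  · exact hunit [] isReducedJ_nil (apartLast_nil x)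
  obtain ⟨hB₀, hc, hcu, hB₀c⟩ := isReducedJ_concat.1 hB
  by_cases hcx : sameF c x
  · exact ⟨B₀, c, (attachLast_of_not_unitL B₀ hcu).symm, hB₀, hc, hcx,
      hB₀c.of_sameF hcx⟩
  · exact hunit _ hB (apartLast_concat.2 hcx)

theorem IsReducedJ.exists_eq_attachHead {u : List (D1 ⊕ D2)} (hu : IsReducedJ A1 A2 u)
    (x : D1 ⊕ D2) : ∃ c u₀, u = attachHead A1 A2 c u₀ ∧ IsReducedJ A1 A2 u₀ ∧
      inJ A1 A2 c ∧ sameF x c ∧ ApartHead x u₀ := by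
  have hunit : ∀ u₀, IsReducedJ A1 A2 u₀ → ApartHead x u₀ → ∃ c u₁,
      u₀ = attachHead A1 A2 c u₁ ∧ IsReducedJ A1 A2 u₁ ∧ inJ A1 A2 c ∧ sameF x c ∧
        ApartHead x u₁ :=
    fun u₀ hu₀ hx => ⟨unitOf A1 A2 x, u₀, (attachHead_unitOf x u₀).symm, hu₀,
      inJ_of_unitL (unitL_unitOf x), (sameF_unitOf x).symm, hx⟩
  cases u with
  | nil => exact hunit [] isReducedJ_nil (apartHead_nil x)
  | cons c u₀ =>
    obtain ⟨hc, hcu, hcu₀, hu₀⟩ := isReducedJ_cons.1 hu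
    by_cases hxc : sameF x c
    · exact ⟨c, u₀, (attachHead_of_not_unitL u₀ hcu).symm, hu₀, hc, hxc,
        hcu₀.of_sameF hxc.symm⟩
    · exact hunit _ hu (apartHead_cons.2 hxc)

theorem push_of_unitL (B : List (D1 ⊕ D2)) {x : D1 ⊕ D2} (hx : unitL A1 A2 x) :
    push A1 A2 B x = B := if_pos hx

theorem push_of_apartLast {B : List (D1 ⊕ D2)} {x : D1 ⊕ D2} (h : ApartLast B x) :
    push A1 A2 B x = attachLast A1 A2 B x := by
  unfold push attachLast
  split_ifs with hx
  · rfl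
  rcases B.eq_nil_or_concat' with rfl | ⟨B₀, c, rfl⟩
  · rfl
  · simp only [List.getLast?_concat, if_neg (apartLast_concat.1 h)]

theorem push_concat_of_sameF (B : List (D1 ⊕ D2)) {c y : D1 ⊕ D2} (hc : inJ A1 A2 c)
    (hcu : ¬ unitL A1 A2 c) (hcy : sameF c y) :
    push A1 A2 (B ++ [c]) y = attachLast A1 A2 B (lmulL A1 A2 c y) := by
  by_cases hyu : unitL A1 A2 y
  · rw [lmulL_of_unitL_right hyu hcy hc, push, if_pos hyu, attachLast_of_not_unitL B hcu]
  rw [push, if_neg hyu]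
  simp only [List.getLast?_concat, List.dropLast_concat, if_pos hcy, attachLast]

theorem push_attachLast {B : List (D1 ⊕ D2)} {c y : D1 ⊕ D2} (hB : ApartLast B y)
    (hc : inJ A1 A2 c) (hcy : sameF c y) :
    push A1 A2 (attachLast A1 A2 B c) y = attachLast A1 A2 B (lmulL A1 A2 c y) := by
  by_cases hcu : unitL A1 A2 c
  · rw [lmulL_of_unitL_left hcu hcy, attachLast, if_pos hcu, push_of_apartLast hB]
  · rw [attachLast_of_not_unitL B hcu, push_concat_of_sameF B hc hcu hcy]

theorem isReducedJ_push {B : List (D1 ⊕ D2)} {x : D1 ⊕ D2} (hB : IsReducedJ A1 A2 B)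
    (hx : inJ A1 A2 x) : IsReducedJ A1 A2 (push A1 A2 B x) := by
  obtain ⟨B₀, c, rfl, hB₀, hc, hcx, hB₀x⟩ := hB.exists_eq_attachLast x
  rw [push_attachLast hB₀x hc hcx]
  exact isReducedJ_attachLast hB₀ (inJ_lmulL hx hcx)
    (hB₀x.of_sameF (hcx.symm.trans (sameF_lmulL c x).symm))

theorem isReducedJ_foldl_push {B w : List (D1 ⊕ D2)} (hB : IsReducedJ A1 A2 B)
    (hw : ∀ c ∈ w, inJ A1 A2 c) : IsReducedJ A1 A2 (w.foldl (push A1 A2) B) := by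
  induction w generalizing B with
  | nil => exact hB
  | cons a w ih => exact ih (isReducedJ_push hB (hw a (by simp))) (fun c hc => hw c (by simp [hc]))

theorem foldl_push_of_isReducedJ_append {B w : List (D1 ⊕ D2)}
    (h : IsReducedJ A1 A2 (B ++ w)) : w.foldl (push A1 A2) B = B ++ w := by
  induction w generalizing B with
  | nil => simp
  | cons a w ih =>
    obtain ⟨-, ha, hBa⟩ := isReducedJ_append.1 h
    obtain ⟨ha, hau, -, -⟩ := isReducedJ_cons.1 ha
    have hBa : ApartLast B a := fun d hd => apartHead_cons.1 (hBa d hd)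
    rw [List.foldl_cons, push_of_apartLast hBa, attachLast_of_not_unitL B hau, ih (by simpa)]
    simp

theorem push_push {B : List (D1 ⊕ D2)} {x y : D1 ⊕ D2} (hB : IsReducedJ A1 A2 B)
    (hx : inJ A1 A2 x) (hxy : sameF x y) :
    push A1 A2 (push A1 A2 B x) y = push A1 A2 B (lmulL A1 A2 x y) := by
  obtain ⟨B₀, c, rfl, -, hc, hcx, hB₀x⟩ := hB.exists_eq_attachLast x
  have hxy' : sameF x (lmulL A1 A2 x y) := (sameF_lmulL x y).symm
  rw [push_attachLast hB₀x hc hcx,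
    push_attachLast (hB₀x.of_sameF hxy) (inJ_lmulL hx hcx)
      ((sameF_lmulL c x).trans (hcx.trans hxy)),
    push_attachLast (hB₀x.of_sameF hxy') hc (hcx.trans hxy'), lmulL_assoc hcx hxy]

theorem foldl_push_attachLast (acc r : List (D1 ⊕ D2)) (c : D1 ⊕ D2) :
    (attachLast A1 A2 r c).foldl (push A1 A2) acc = push A1 A2 (r.foldl (push A1 A2) acc) c := by
  unfold attachLast
  split_ifs with hc
  · rw [push_of_unitL _ hc]
  · rw [List.foldl_append]
    rfl

theorem foldl_push_push {acc r : List (D1 ⊕ D2)} {x : D1 ⊕ D2} (hacc : IsReducedJ A1 A2 acc)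
    (hr : IsReducedJ A1 A2 r) :
    (push A1 A2 r x).foldl (push A1 A2) acc = push A1 A2 (r.foldl (push A1 A2) acc) x := by
  obtain ⟨r₀, c, rfl, hr₀, hc, hcx, hr₀x⟩ := hr.exists_eq_attachLast x
  rw [push_attachLast hr₀x hc hcx, foldl_push_attachLast, foldl_push_attachLast,
    push_push (isReducedJ_foldl_push hacc hr₀.forall_inJ) hc hcx]

theorem reduceW_append (u v : List (D1 ⊕ D2)) :
    reduceW A1 A2 (u ++ v) = v.foldl (push A1 A2) (reduceW A1 A2 u) :=
  List.foldl_append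

theorem isReducedJ_reduceW {w : List (D1 ⊕ D2)} (hw : ∀ c ∈ w, inJ A1 A2 c) :
    IsReducedJ A1 A2 (reduceW A1 A2 w) :=
  isReducedJ_foldl_push isReducedJ_nil hw

theorem reduceW_of_isReducedJ {w : List (D1 ⊕ D2)} (hw : IsReducedJ A1 A2 w) :
    reduceW A1 A2 w = w :=
  foldl_push_of_isReducedJ_append (by simpa using hw)

theorem foldl_push_reduceW {acc v : List (D1 ⊕ D2)} (hacc : IsReducedJ A1 A2 acc)
    (hv : ∀ c ∈ v, inJ A1 A2 c) :
    (reduceW A1 A2 v).foldl (push A1 A2) acc = v.foldl (push A1 A2) acc := by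
  induction v using List.reverseRecOn with
  | nil => rfl
  | append_singleton v x ih =>
    have hv' : ∀ c ∈ v, inJ A1 A2 c := fun c hc => hv c (by simp [hc])
    simp only [reduceW_append, List.foldl_append, List.foldl_cons, List.foldl_nil]
    rw [foldl_push_push hacc (isReducedJ_reduceW hv'), ih hv']

theorem foldl_push_foldl_push {a b c : List (D1 ⊕ D2)} (ha : IsReducedJ A1 A2 a)
    (hb : IsReducedJ A1 A2 b) (hc : ∀ x ∈ c, inJ A1 A2 x) :
    (c.foldl (push A1 A2) b).foldl (push A1 A2) a
      = c.foldl (push A1 A2) (b.foldl (push A1 A2) a) := by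
  have hbc : ∀ x ∈ b ++ c, inJ A1 A2 x :=
    fun x hx => (List.mem_append.1 hx).elim (hb.forall_inJ x) (hc x)
  rw [← reduceW_of_isReducedJ hb, ← reduceW_append, foldl_push_reduceW ha hbc,
    List.foldl_append, reduceW_of_isReducedJ hb]

variable (A1 A2) in
/-- The reduced word of `c * u` for a reduced word `u`. -/
noncomputable def consP (c : D1 ⊕ D2) : List (D1 ⊕ D2) → List (D1 ⊕ D2)
  | [] => attachHead A1 A2 c []
  | d :: u =>
    if sameF c d then attachHead A1 A2 (lmulL A1 A2 c d) u else attachHead A1 A2 c (d :: u)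

theorem consP_of_apartHead {c : D1 ⊕ D2} {u : List (D1 ⊕ D2)} (h : ApartHead c u) :
    consP A1 A2 c u = attachHead A1 A2 c u := by
  cases u with
  | nil => rfl
  | cons d u => exact if_neg (apartHead_cons.1 h)

theorem consP_attachHead {c d : D1 ⊕ D2} {u : List (D1 ⊕ D2)} (hu : ApartHead c u)
    (hc : inJ A1 A2 c) (hcd : sameF c d) :
    consP A1 A2 c (attachHead A1 A2 d u) = attachHead A1 A2 (lmulL A1 A2 c d) u := by
  by_cases hd : unitL A1 A2 d
  · rw [attachHead, if_pos hd, lmulL_of_unitL_right hd hcd hc, consP_of_apartHead hu]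
  · rw [attachHead_of_not_unitL u hd, consP, if_pos hcd]

theorem foldl_push_attachHead (acc u : List (D1 ⊕ D2)) (c : D1 ⊕ D2) :
    (attachHead A1 A2 c u).foldl (push A1 A2) acc = u.foldl (push A1 A2) (push A1 A2 acc c) := by
  unfold attachHead
  split_ifs with hc
  · rw [push_of_unitL _ hc]
  · rfl

theorem attachLast_nil_append (c : D1 ⊕ D2) (u : List (D1 ⊕ D2)) :
    attachLast A1 A2 [] c ++ u = attachHead A1 A2 c u := by
  unfold attachLast attachHead
  split_ifs <;> rfl

theorem reduceW_cons {c : D1 ⊕ D2} {v : List (D1 ⊕ D2)} (hv : IsReducedJ A1 A2 v)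
    (hc : inJ A1 A2 c) : reduceW A1 A2 (c :: v) = consP A1 A2 c v := by
  obtain ⟨d, v₀, rfl, hv₀, hd, hcd, hcv₀⟩ := hv.exists_eq_attachHead c
  have hred : IsReducedJ A1 A2 (attachHead A1 A2 (lmulL A1 A2 c d) v₀) :=
    isReducedJ_attachHead hv₀ (inJ_lmulL hd hcd) (hcv₀.of_sameF (sameF_lmulL c d).symm)
  rw [consP_attachHead hcv₀ hc hcd, reduceW, List.foldl_cons, foldl_push_attachHead,
    push_of_apartLast (apartLast_nil c), push_attachLast (apartLast_nil d) hc hcd,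
    foldl_push_of_isReducedJ_append (by rwa [attachLast_nil_append]), attachLast_nil_append]

theorem foldl_push_consP {c : D1 ⊕ D2} {v m : List (D1 ⊕ D2)} (hv : IsReducedJ A1 A2 v)
    (hc : inJ A1 A2 c) (hm : ∀ a ∈ m, inJ A1 A2 a) :
    m.foldl (push A1 A2) (consP A1 A2 c v) = consP A1 A2 c (m.foldl (push A1 A2) v) := by
  have hvm : ∀ a ∈ v ++ m, inJ A1 A2 a :=
    fun a ha => (List.mem_append.1 ha).elim (hv.forall_inJ a) (hm a)
  rw [← reduceW_cons hv hc, ← reduceW_cons (isReducedJ_foldl_push hv hm) hc]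
  calc m.foldl (push A1 A2) (reduceW A1 A2 (c :: v))
      = (v ++ m).foldl (push A1 A2) (push A1 A2 [] c) := (reduceW_append (c :: v) m).symm
    _ = (reduceW A1 A2 (v ++ m)).foldl (push A1 A2) (push A1 A2 [] c) :=
      (foldl_push_reduceW (isReducedJ_push isReducedJ_nil hc) hvm).symm
    _ = reduceW A1 A2 (c :: m.foldl (push A1 A2) v) := by
      rw [reduceW_append, reduceW_of_isReducedJ hv]
      rfl

variable (A1 A2) in
noncomputable def invW (v : List (D1 ⊕ D2)) : List (D1 ⊕ D2) :=
  (v.map (jinvL A1 A2)).reverse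

theorem isReducedJ_invW {v : List (D1 ⊕ D2)} (hv : IsReducedJ A1 A2 v) :
    IsReducedJ A1 A2 (invW A1 A2 v) := by
  refine ⟨fun c hc => ?_, ?_⟩
  · obtain ⟨a, ha, rfl⟩ := List.mem_map.1 (List.mem_reverse.1 hc)
    exact ⟨inJ_jinvL a, not_unitL_jinvL (hv.1 a ha).1 (hv.1 a ha).2⟩
  · rw [invW, List.isChain_reverse, List.isChain_map]
    exact hv.2.imp fun a b hab h =>
      hab ((sameF_jinvL a).symm.trans (h.symm.trans (sameF_jinvL b)))

theorem foldl_push_invW_self {v : List (D1 ⊕ D2)} (hv : IsReducedJ A1 A2 v) :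
    (invW A1 A2 v).foldl (push A1 A2) v = [] := by
  induction v using List.reverseRecOn with
  | nil => rfl
  | append_singleton v y ih =>
    obtain ⟨hv, hy, hyu, -⟩ := isReducedJ_concat.1 hv
    rw [invW, List.map_append, List.reverse_append, List.map_singleton, List.reverse_singleton,
      List.singleton_append, List.foldl_cons,
      push_concat_of_sameF v hy hyu (sameF_jinvL y).symm, attachLast, if_pos (unitL_lmulL_jinvL y)]
    exact ih hv

theorem foldl_push_self_invW {v : List (D1 ⊕ D2)} (hv : IsReducedJ A1 A2 v) :
    v.foldl (push A1 A2) (invW A1 A2 v) = [] := by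
  induction v with
  | nil => rfl
  | cons y v ih =>
    obtain ⟨hy, hyu, -, hv⟩ := isReducedJ_cons.1 hv
    rw [invW, List.map_cons, List.reverse_cons, List.foldl_cons,
      push_concat_of_sameF _ (inJ_jinvL y) (not_unitL_jinvL hy hyu) (sameF_jinvL y),
      attachLast, if_pos (unitL_jinvL_lmulL hy)]
    exact ih hv

end ReducedWords

section Hat

variable {D1 D2 : Type} {A1 : DigroupStruct D1} {A2 : DigroupStruct D2}

theorem map_tauL_of_inJ {w : List (D1 ⊕ D2)} (h : ∀ c ∈ w, inJ A1 A2 c) :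
    w.map (tauL A1 A2) = w :=
  (List.map_congr_left fun c hc => tauL_of_inJ (h c hc)).trans (List.map_id' w)

theorem inJ_of_mem_map_tauL {w : List (D1 ⊕ D2)} {c : D1 ⊕ D2} (hc : c ∈ w.map (tauL A1 A2)) :
    inJ A1 A2 c := by
  obtain ⟨a, -, rfl⟩ := List.mem_map.1 hc
  exact inJ_tauL a

theorem isReducedJ_hatW (w : List (D1 ⊕ D2)) : IsReducedJ A1 A2 (hatW A1 A2 w) :=
  isReducedJ_reduceW fun _ => inJ_of_mem_map_tauL

theorem hatW_append (u v : List (D1 ⊕ D2)) :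
    hatW A1 A2 (u ++ v) = (hatW A1 A2 v).foldl (push A1 A2) (hatW A1 A2 u) := by
  unfold hatW
  rw [List.map_append, reduceW_append,
    foldl_push_reduceW (isReducedJ_reduceW fun _ => inJ_of_mem_map_tauL)
      fun _ => inJ_of_mem_map_tauL]

theorem hatW_of_isReducedJ {w : List (D1 ⊕ D2)} (h : IsReducedJ A1 A2 w) : hatW A1 A2 w = w := by
  rw [hatW, map_tauL_of_inJ h.forall_inJ, reduceW_of_isReducedJ h]

theorem hatW_one : hatW A1 A2 [Sum.inl A1.one] = [] := by
  rw [hatW, List.map_singleton, tauL_of_inJ (inJ_of_unitL (x := Sum.inl A1.one) rfl)]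
  exact push_of_unitL (x := Sum.inl A1.one) [] rfl

theorem toRep_of_ne_nil {s : List (D1 ⊕ D2)} (h : s ≠ []) : toRep A1 s = s := if_neg h

theorem hatW_toRep {s : List (D1 ⊕ D2)} (hs : IsReducedJ A1 A2 s) :
    hatW A1 A2 (toRep A1 s) = s := by
  by_cases h : s = []
  · subst h
    exact hatW_one
  · rw [toRep_of_ne_nil h, hatW_of_isReducedJ hs]

end Hat

section OmegaElements

variable {D1 D2 : Type} (A1 : DigroupStruct D1) (A2 : DigroupStruct D2)

/-- The element `[p x q]_{|p|+1}` of `[A⁺]_ω`. -/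
def marked (p : List (D1 ⊕ D2)) (x : D1 ⊕ D2) (q : List (D1 ⊕ D2)) :
    List (D1 ⊕ D2) × ℕ :=
  (p ++ x :: q, p.length + 1)

/-- `[p x q]_{|p|+1}` is an element of `Ω₂`, with its decomposition. -/
def IsSplit (p : List (D1 ⊕ D2)) (x : D1 ⊕ D2) (q : List (D1 ⊕ D2)) : Prop :=
  IsReducedJ A1 A2 p ∧ ¬ inJ A1 A2 x ∧ IsReducedJ A1 A2 q ∧ ApartLast p x ∧ ApartHead x q

/-- The test by which `opLspec` and `opRspec` recognise the elements of `Ω₁`. -/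
def IsOmegaOne (z : List (D1 ⊕ D2) × ℕ) : Prop := z.2 = 1 ∧ ∀ c ∈ z.1, inJ A1 A2 c

/-- The `Ω₂` branch of `opLspec`, with `r = (wp)^`. -/
noncomputable def glueL (r : List (D1 ⊕ D2)) (x : D1 ⊕ D2) (q : List (D1 ⊕ D2)) :
    List (D1 ⊕ D2) × ℕ :=
  match r.getLast? with
  | none => (x :: q, 1)
  | some c =>
    if sameF c x then (r.dropLast ++ lmulL A1 A2 c x :: q, r.dropLast.length + 1)
    else (r ++ x :: q, r.length + 1)

/-- The `Ω₂` branch of `opRspec`, with the reduced word `(qw)^` as last argument. -/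
noncomputable def glueR (p : List (D1 ⊕ D2)) (x : D1 ⊕ D2) :
    List (D1 ⊕ D2) → List (D1 ⊕ D2) × ℕ
  | [] => (p ++ [x], p.length + 1)
  | c :: v =>
    if sameF x c then (p ++ rmulL A1 A2 x c :: v, p.length + 1)
    else (p ++ x :: c :: v, p.length + 1)

variable {A1 A2}

theorem altRed_iff (w : List (D1 ⊕ D2)) :
    AltRed A1 A2 w ↔ (∀ c ∈ w, ¬ unitL A1 A2 c) ∧ w.IsChain (fun a b => ¬ sameF a b) :=
  Iff.rfl

theorem isSplit_iff_altRed {p q : List (D1 ⊕ D2)} {x : D1 ⊕ D2} (hp : ∀ c ∈ p, inJ A1 A2 c)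
    (hx : ¬ inJ A1 A2 x) (hq : ∀ c ∈ q, inJ A1 A2 c) :
    IsSplit A1 A2 p x q ↔ AltRed A1 A2 (p ++ x :: q) := by
  have hxu := not_unitL_of_not_inJ hx
  simp only [IsSplit, altRed_iff, IsReducedJ, List.isChain_append, List.isChain_cons,
    List.mem_append, List.mem_cons, or_imp, forall_and, forall_eq, ApartLast, ApartHead,
    List.head?_cons, Option.mem_def, Option.some.injEq, forall_eq']
  tauto

theorem inOmega_marked {p q : List (D1 ⊕ D2)} {x : D1 ⊕ D2} (h : IsSplit A1 A2 p x q) :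
    InOmega A1 A2 (marked p x q) :=
  have hp := h.1.forall_inJ
  have hq := h.2.2.1.forall_inJ
  Or.inr ⟨p, x, q, rfl, rfl, h.2.1, hp, hq, (isSplit_iff_altRed hp h.2.1 hq).1 h⟩

theorem not_isOmegaOne_marked (p q : List (D1 ⊕ D2)) {x : D1 ⊕ D2} (hx : ¬ inJ A1 A2 x) :
    ¬ IsOmegaOne A1 A2 (marked p x q) :=
  fun h => hx (h.2 x (by simp [marked]))

theorem isOmegaOne_toRep {s : List (D1 ⊕ D2)} (hs : IsReducedJ A1 A2 s) :
    IsOmegaOne A1 A2 (toRep A1 s, 1) := by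
  refine ⟨rfl, ?_⟩
  by_cases h : s = []
  · simp only [toRep, h, if_true, List.mem_singleton, forall_eq]
    exact inJ_of_unitL (x := Sum.inl A1.one) rfl
  · rw [toRep_of_ne_nil h]
    exact hs.forall_inJ

theorem inOmega_toRep {s : List (D1 ⊕ D2)} (hs : IsReducedJ A1 A2 s) :
    InOmega A1 A2 (toRep A1 s, 1) := by
  by_cases h : s = []
  · exact Or.inl ⟨rfl, Or.inl (if_pos h)⟩
  · rw [toRep_of_ne_nil h]
    exact Or.inl ⟨rfl, Or.inr ⟨h, ⟨fun c hc => (hs.1 c hc).2, hs.2⟩, hs.forall_inJ⟩⟩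

theorem InOmega.cases {z : List (D1 ⊕ D2) × ℕ} (hz : InOmega A1 A2 z) :
    (IsOmegaOne A1 A2 z ∧ (toRep A1 (hatW A1 A2 z.1), 1) = z) ∨
      ∃ p x q, IsSplit A1 A2 p x q ∧ z = marked p x q := by
  obtain ⟨w, n⟩ := z
  rcases hz with ⟨rfl, rfl | ⟨hne, halt, hJ⟩⟩ | ⟨p, x, q, rfl, rfl, hx, hp, hq, halt⟩
  · refine Or.inl ⟨⟨rfl, ?_⟩, by rw [hatW_one]; rfl⟩
    simpa using inJ_of_unitL (x := Sum.inl A1.one) rfl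
  · have hw : IsReducedJ A1 A2 w := ⟨fun c hc => ⟨hJ c hc, halt.1 c hc⟩, halt.2⟩
    exact Or.inl ⟨⟨rfl, hJ⟩, by rw [hatW_of_isReducedJ hw, toRep_of_ne_nil hne]⟩
  · exact Or.inr ⟨p, x, q, (isSplit_iff_altRed hp hx hq).2 halt, rfl⟩

end OmegaElements

section Operations

variable {D1 D2 : Type} {A1 : DigroupStruct D1} {A2 : DigroupStruct D2}

theorem IsSplit.lmul {p q : List (D1 ⊕ D2)} {c x : D1 ⊕ D2} (h : IsSplit A1 A2 p x q)
    (hc : inJ A1 A2 c) (hcx : sameF c x) : IsSplit A1 A2 p (lmulL A1 A2 c x) q :=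
  have hx : sameF x (lmulL A1 A2 c x) := hcx.symm.trans (sameF_lmulL c x).symm
  ⟨h.1, not_inJ_lmulL hc h.2.1 hcx, h.2.2.1, h.2.2.2.1.of_sameF hx, h.2.2.2.2.of_sameF hx⟩

theorem IsSplit.rmul {p q : List (D1 ⊕ D2)} {x d : D1 ⊕ D2} (h : IsSplit A1 A2 p x q)
    (hd : inJ A1 A2 d) (hxd : sameF x d) : IsSplit A1 A2 p (rmulL A1 A2 x d) q :=
  have hx : sameF x (rmulL A1 A2 x d) := (sameF_rmulL x d).symm
  ⟨h.1, not_inJ_rmulL h.2.1 hd hxd, h.2.2.1, h.2.2.2.1.of_sameF hx, h.2.2.2.2.of_sameF hx⟩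

theorem glueL_of_apartLast {r q : List (D1 ⊕ D2)} {x : D1 ⊕ D2} (h : ApartLast r x) :
    glueL A1 A2 r x q = marked r x q := by
  rcases r.eq_nil_or_concat' with rfl | ⟨r, c, rfl⟩
  · rfl
  · simp [glueL, if_neg (apartLast_concat.1 h), marked]

theorem glueL_attachLast {r q : List (D1 ⊕ D2)} {c x : D1 ⊕ D2} (hr : ApartLast r x)
    (hcx : sameF c x) : glueL A1 A2 (attachLast A1 A2 r c) x q = marked r (lmulL A1 A2 c x) q := by
  by_cases hc : unitL A1 A2 c
  · rw [attachLast, if_pos hc, lmulL_of_unitL_left hc hcx, glueL_of_apartLast hr]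
  · simp [attachLast, hc, glueL, hcx, marked]

theorem glueR_of_apartHead {p s : List (D1 ⊕ D2)} {x : D1 ⊕ D2} (h : ApartHead x s) :
    glueR A1 A2 p x s = marked p x s := by
  cases s with
  | nil => rfl
  | cons c s => exact if_neg (apartHead_cons.1 h)

theorem glueR_attachHead {p s : List (D1 ⊕ D2)} {x d : D1 ⊕ D2} (hs : ApartHead x s)
    (hxd : sameF x d) : glueR A1 A2 p x (attachHead A1 A2 d s) = marked p (rmulL A1 A2 x d) s := by
  by_cases hd : unitL A1 A2 d
  · rw [attachHead, if_pos hd, rmulL_of_unitL_right hd hxd, glueR_of_apartHead hs]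
  · rw [attachHead_of_not_unitL s hd]
    exact if_pos hxd

theorem glueL_push {r q : List (D1 ⊕ D2)} {c x : D1 ⊕ D2} (hr : IsReducedJ A1 A2 r)
    (hcx : sameF c x) :
    glueL A1 A2 (push A1 A2 r c) x q = glueL A1 A2 r (lmulL A1 A2 c x) q := by
  obtain ⟨r₀, c₀, rfl, -, hc₀, hc₀x, hr₀x⟩ := hr.exists_eq_attachLast x
  have hx : sameF x (lmulL A1 A2 c x) := hcx.symm.trans (sameF_lmulL c x).symm
  rw [push_attachLast (hr₀x.of_sameF hcx.symm) hc₀ (hc₀x.trans hcx.symm),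
    glueL_attachLast hr₀x ((sameF_lmulL c₀ c).trans (hc₀x.trans hcx.symm) |>.trans hcx),
    glueL_attachLast (hr₀x.of_sameF hx) (hc₀x.trans hx),
    lmulL_assoc (hc₀x.trans hcx.symm) hcx]

theorem glueR_consP {p t : List (D1 ⊕ D2)} {x d : D1 ⊕ D2} (ht : IsReducedJ A1 A2 t)
    (hd : inJ A1 A2 d) (hxd : sameF x d) :
    glueR A1 A2 p x (consP A1 A2 d t) = glueR A1 A2 p (rmulL A1 A2 x d) t := by
  obtain ⟨d₀, t₀, rfl, -, hd₀, hdd₀, hdt₀⟩ := ht.exists_eq_attachHead d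
  have hx : sameF (rmulL A1 A2 x d) d := (sameF_rmulL x d).trans hxd
  rw [consP_attachHead hdt₀ hd hdd₀,
    glueR_attachHead (hdt₀.of_sameF hxd.symm) (hxd.trans (sameF_lmulL d d₀).symm),
    glueR_attachHead (hdt₀.of_sameF hx.symm) (hx.trans hdd₀), rmulL_rmulL hd hd₀ hxd hdd₀]

theorem opLspec_of_isOmegaOne (z : List (D1 ⊕ D2) × ℕ) {z' : List (D1 ⊕ D2) × ℕ}
    (h : IsOmegaOne A1 A2 z') :
    opLspec A1 A2 z z' = (toRep A1 ((hatW A1 A2 z'.1).foldl (push A1 A2) (hatW A1 A2 z.1)), 1) := by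
  rw [opLspec, if_pos (show _ ∧ _ from h), hatW_append]

theorem opRspec_of_isOmegaOne {z : List (D1 ⊕ D2) × ℕ} (z' : List (D1 ⊕ D2) × ℕ)
    (h : IsOmegaOne A1 A2 z) :
    opRspec A1 A2 z z' = (toRep A1 ((hatW A1 A2 z'.1).foldl (push A1 A2) (hatW A1 A2 z.1)), 1) := by
  rw [opRspec, if_pos (show _ ∧ _ from h), hatW_append]

theorem marked_take_getD_drop (p : List (D1 ⊕ D2)) (x : D1 ⊕ D2) (q : List (D1 ⊕ D2))
    (d : D1 ⊕ D2) :
    (marked p x q).1.take ((marked p x q).2 - 1) = p ∧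
      (marked p x q).1.getD ((marked p x q).2 - 1) d = x ∧
      (marked p x q).1.drop (marked p x q).2 = q := by
  simp [marked]

theorem opLspec_marked (z : List (D1 ⊕ D2) × ℕ) {p q : List (D1 ⊕ D2)} {x : D1 ⊕ D2}
    (hp : IsReducedJ A1 A2 p) (hx : ¬ inJ A1 A2 x) :
    opLspec A1 A2 z (marked p x q) = glueL A1 A2 (p.foldl (push A1 A2) (hatW A1 A2 z.1)) x q := by
  rw [opLspec, if_neg (show ¬ (_ ∧ _) from not_isOmegaOne_marked p q hx)]
  obtain ⟨hp', hx', hq'⟩ := marked_take_getD_drop p x q (Sum.inl A1.one)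
  simp only [hp', hx', hq', hatW_append, hatW_of_isReducedJ hp]
  rfl

theorem opRspec_marked (z' : List (D1 ⊕ D2) × ℕ) {p q : List (D1 ⊕ D2)} {x : D1 ⊕ D2}
    (hx : ¬ inJ A1 A2 x) (hq : IsReducedJ A1 A2 q) :
    opRspec A1 A2 (marked p x q) z' = glueR A1 A2 p x ((hatW A1 A2 z'.1).foldl (push A1 A2) q) := by
  rw [opRspec, if_neg (show ¬ (_ ∧ _) from not_isOmegaOne_marked p q hx)]
  obtain ⟨hp', hx', hq'⟩ := marked_take_getD_drop p x q (Sum.inl A1.one)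
  simp only [hp', hx', hq', hatW_append, hatW_of_isReducedJ hq]
  rfl

theorem opLspec_toRep (z : List (D1 ⊕ D2) × ℕ) {s : List (D1 ⊕ D2)}
    (hs : IsReducedJ A1 A2 s) :
    opLspec A1 A2 z (toRep A1 s, 1) = (toRep A1 (s.foldl (push A1 A2) (hatW A1 A2 z.1)), 1) := by
  rw [opLspec_of_isOmegaOne z (isOmegaOne_toRep hs), hatW_toRep hs]

theorem opRspec_toRep {s : List (D1 ⊕ D2)} (z' : List (D1 ⊕ D2) × ℕ)
    (hs : IsReducedJ A1 A2 s) :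
    opRspec A1 A2 (toRep A1 s, 1) z' = (toRep A1 ((hatW A1 A2 z'.1).foldl (push A1 A2) s), 1) := by
  rw [opRspec_of_isOmegaOne z' (isOmegaOne_toRep hs), hatW_toRep hs]

theorem opLspec_congr_left {z₁ z₂ : List (D1 ⊕ D2) × ℕ}
    (h : hatW A1 A2 z₁.1 = hatW A1 A2 z₂.1) (z' : List (D1 ⊕ D2) × ℕ) :
    opLspec A1 A2 z₁ z' = opLspec A1 A2 z₂ z' := by
  simp only [opLspec, hatW_append, h]

theorem opRspec_congr_right (z : List (D1 ⊕ D2) × ℕ) {z₁ z₂ : List (D1 ⊕ D2) × ℕ}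
    (h : hatW A1 A2 z₁.1 = hatW A1 A2 z₂.1) : opRspec A1 A2 z z₁ = opRspec A1 A2 z z₂ := by
  simp only [opRspec, hatW_append, h]

theorem hatW_marked {p q : List (D1 ⊕ D2)} (x : D1 ⊕ D2) (hp : IsReducedJ A1 A2 p)
    (hq : IsReducedJ A1 A2 q) :
    hatW A1 A2 (marked p x q).1 = q.foldl (push A1 A2) (push A1 A2 p (tauL A1 A2 x)) := by
  rw [marked, hatW, List.map_append, List.map_cons, map_tauL_of_inJ hp.forall_inJ,
    map_tauL_of_inJ hq.forall_inJ, reduceW_append, reduceW_of_isReducedJ hp, List.foldl_cons]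

theorem hatW_glueL {r q : List (D1 ⊕ D2)} (x : D1 ⊕ D2) (hr : IsReducedJ A1 A2 r)
    (hq : IsReducedJ A1 A2 q) :
    hatW A1 A2 (glueL A1 A2 r x q).1 = q.foldl (push A1 A2) (push A1 A2 r (tauL A1 A2 x)) := by
  obtain ⟨r₀, c, rfl, hr₀, hc, hcx, hr₀x⟩ := hr.exists_eq_attachLast x
  have hcτ : sameF c (tauL A1 A2 x) := hcx.trans (sameF_tauL x).symm
  rw [glueL_attachLast hr₀x hcx, hatW_marked _ hr₀ hq, tauL_lmulL hc hcx,
    push_attachLast (hr₀x.of_sameF (sameF_tauL x).symm) hc hcτ,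
    push_of_apartLast (hr₀x.of_sameF (hcx.symm.trans (sameF_lmulL c _).symm))]

theorem hatW_glueR {p s : List (D1 ⊕ D2)} (x : D1 ⊕ D2) (hp : IsReducedJ A1 A2 p)
    (hs : IsReducedJ A1 A2 s) :
    hatW A1 A2 (glueR A1 A2 p x s).1 = s.foldl (push A1 A2) (push A1 A2 p (tauL A1 A2 x)) := by
  obtain ⟨d, s₀, rfl, hs₀, hd, hxd, hxs₀⟩ := hs.exists_eq_attachHead x
  rw [glueR_attachHead hxs₀ hxd, hatW_marked _ hp hs₀, tauL_rmulL hd hxd, foldl_push_attachHead,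
    push_push hp (inJ_tauL x) ((sameF_tauL x).trans hxd)]

theorem hatW_opLspec (z : List (D1 ⊕ D2) × ℕ) {z' : List (D1 ⊕ D2) × ℕ}
    (hz' : InOmega A1 A2 z') :
    hatW A1 A2 (opLspec A1 A2 z z').1 = (hatW A1 A2 z'.1).foldl (push A1 A2) (hatW A1 A2 z.1) := by
  have hz := isReducedJ_hatW (A1 := A1) (A2 := A2) z.1
  rcases hz'.cases with ⟨h1, -⟩ | ⟨p, x, q, ⟨hp, hx, hq, -, -⟩, rfl⟩
  · rw [opLspec_of_isOmegaOne z h1,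
      hatW_toRep (isReducedJ_foldl_push hz (isReducedJ_hatW _).forall_inJ)]
  · rw [opLspec_marked z hp hx, hatW_glueL x (isReducedJ_foldl_push hz hp.forall_inJ) hq,
      hatW_marked x hp hq, foldl_push_foldl_push hz (isReducedJ_push hp (inJ_tauL x))
        hq.forall_inJ, foldl_push_push hz hp]

theorem hatW_opRspec {z : List (D1 ⊕ D2) × ℕ} (hz : InOmega A1 A2 z)
    (z' : List (D1 ⊕ D2) × ℕ) :
    hatW A1 A2 (opRspec A1 A2 z z').1 = (hatW A1 A2 z'.1).foldl (push A1 A2) (hatW A1 A2 z.1) := by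
  have hz' := isReducedJ_hatW (A1 := A1) (A2 := A2) z'.1
  rcases hz.cases with ⟨h1, -⟩ | ⟨p, x, q, ⟨hp, hx, hq, -, -⟩, rfl⟩
  · rw [opRspec_of_isOmegaOne z' h1,
      hatW_toRep (isReducedJ_foldl_push (isReducedJ_hatW _) hz'.forall_inJ)]
  · rw [opRspec_marked z' hx hq, hatW_glueR x hp (isReducedJ_foldl_push hq hz'.forall_inJ),
      hatW_marked x hp hq, foldl_push_foldl_push (isReducedJ_push hp (inJ_tauL x)) hq
        hz'.forall_inJ]

theorem inOmega_opLspec (z : List (D1 ⊕ D2) × ℕ) {z' : List (D1 ⊕ D2) × ℕ}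
    (hz' : InOmega A1 A2 z') : InOmega A1 A2 (opLspec A1 A2 z z') := by
  have hz := isReducedJ_hatW (A1 := A1) (A2 := A2) z.1
  rcases hz'.cases with ⟨h1, -⟩ | ⟨p, x, q, ⟨hp, hx, hq, -, hxq⟩, rfl⟩
  · rw [opLspec_of_isOmegaOne z h1]
    exact inOmega_toRep (isReducedJ_foldl_push hz (isReducedJ_hatW _).forall_inJ)
  · obtain ⟨r₀, c, hr, hr₀, hc, hcx, hr₀x⟩ :=
      (isReducedJ_foldl_push hz hp.forall_inJ).exists_eq_attachLast x
    rw [opLspec_marked z hp hx, hr, glueL_attachLast hr₀x hcx]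
    exact inOmega_marked (IsSplit.lmul ⟨hr₀, hx, hq, hr₀x, hxq⟩ hc hcx)

theorem inOmega_opRspec {z : List (D1 ⊕ D2) × ℕ} (hz : InOmega A1 A2 z)
    (z' : List (D1 ⊕ D2) × ℕ) : InOmega A1 A2 (opRspec A1 A2 z z') := by
  have hz' := isReducedJ_hatW (A1 := A1) (A2 := A2) z'.1
  rcases hz.cases with ⟨h1, -⟩ | ⟨p, x, q, ⟨hp, hx, hq, hpx, -⟩, rfl⟩
  · rw [opRspec_of_isOmegaOne z' h1]
    exact inOmega_toRep (isReducedJ_foldl_push (isReducedJ_hatW _) hz'.forall_inJ)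
  · obtain ⟨d, s₀, hs, hs₀, hd, hxd, hxs₀⟩ :=
      (isReducedJ_foldl_push hq hz'.forall_inJ).exists_eq_attachHead x
    rw [opRspec_marked z' hx hq, hs, glueR_attachHead hxs₀ hxd]
    exact inOmega_marked (IsSplit.rmul ⟨hp, hx, hs₀, hpx, hxs₀⟩ hd hxd)

theorem opLspec_glueL (z : List (D1 ⊕ D2) × ℕ) {r q : List (D1 ⊕ D2)} {x : D1 ⊕ D2}
    (hr : IsReducedJ A1 A2 r) (hx : ¬ inJ A1 A2 x) :
    opLspec A1 A2 z (glueL A1 A2 r x q)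
      = glueL A1 A2 (r.foldl (push A1 A2) (hatW A1 A2 z.1)) x q := by
  obtain ⟨r₀, c, rfl, hr₀, hc, hcx, hr₀x⟩ := hr.exists_eq_attachLast x
  rw [glueL_attachLast hr₀x hcx, opLspec_marked z hr₀ (not_inJ_lmulL hc hx hcx),
    foldl_push_attachLast,
    glueL_push (isReducedJ_foldl_push (isReducedJ_hatW _) hr₀.forall_inJ) hcx]

theorem opRspec_glueR (z' : List (D1 ⊕ D2) × ℕ) {p s : List (D1 ⊕ D2)} {x : D1 ⊕ D2}
    (hx : ¬ inJ A1 A2 x) (hs : IsReducedJ A1 A2 s) :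
    opRspec A1 A2 (glueR A1 A2 p x s) z'
      = glueR A1 A2 p x ((hatW A1 A2 z'.1).foldl (push A1 A2) s) := by
  have hz' := (isReducedJ_hatW (A1 := A1) (A2 := A2) z'.1).forall_inJ
  obtain ⟨d, s₀, rfl, hs₀, hd, hxd, hxs₀⟩ := hs.exists_eq_attachHead x
  rw [glueR_attachHead hxs₀ hxd, opRspec_marked z' (not_inJ_rmulL hx hd hxd) hs₀,
    ← consP_of_apartHead (hxs₀.of_sameF hxd), foldl_push_consP hs₀ hd hz',
    glueR_consP (isReducedJ_foldl_push hs₀ hz') hd hxd]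

theorem opLspec_opLspec {a b c : List (D1 ⊕ D2) × ℕ} (hb : InOmega A1 A2 b)
    (hc : InOmega A1 A2 c) :
    opLspec A1 A2 (opLspec A1 A2 a b) c = opLspec A1 A2 a (opLspec A1 A2 b c) := by
  have ha := isReducedJ_hatW (A1 := A1) (A2 := A2) a.1
  have hb' := isReducedJ_hatW (A1 := A1) (A2 := A2) b.1
  rcases hc.cases with ⟨h1, -⟩ | ⟨p, x, q, ⟨hp, hx, -, -, -⟩, rfl⟩
  · rw [opLspec_of_isOmegaOne _ h1, opLspec_of_isOmegaOne _ h1, hatW_opLspec a hb,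
      opLspec_toRep a (isReducedJ_foldl_push hb' (isReducedJ_hatW _).forall_inJ),
      foldl_push_foldl_push ha hb' (isReducedJ_hatW _).forall_inJ]
  · rw [opLspec_marked _ hp hx, opLspec_marked _ hp hx, hatW_opLspec a hb,
      opLspec_glueL a (isReducedJ_foldl_push hb' hp.forall_inJ) hx,
      foldl_push_foldl_push ha hb' hp.forall_inJ]

theorem opRspec_opRspec {a b c : List (D1 ⊕ D2) × ℕ} (ha : InOmega A1 A2 a)
    (hb : InOmega A1 A2 b) :
    opRspec A1 A2 (opRspec A1 A2 a b) c = opRspec A1 A2 a (opRspec A1 A2 b c) := by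
  have hb' := isReducedJ_hatW (A1 := A1) (A2 := A2) b.1
  have hc := (isReducedJ_hatW (A1 := A1) (A2 := A2) c.1).forall_inJ
  rcases ha.cases with ⟨h1, -⟩ | ⟨p, x, q, ⟨-, hx, hq, -, -⟩, rfl⟩
  · rw [opRspec_of_isOmegaOne _ h1, opRspec_of_isOmegaOne _ h1, hatW_opRspec hb,
      opRspec_toRep c (isReducedJ_foldl_push (isReducedJ_hatW _) hb'.forall_inJ),
      foldl_push_foldl_push (isReducedJ_hatW _) hb' hc]
  · rw [opRspec_marked _ hx hq, opRspec_marked _ hx hq, hatW_opRspec hb,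
      opRspec_glueR c hx (isReducedJ_foldl_push hq hb'.forall_inJ),
      foldl_push_foldl_push hq hb' hc]

theorem opLspec_opRspec (a c : List (D1 ⊕ D2) × ℕ) {b : List (D1 ⊕ D2) × ℕ}
    (hb : InOmega A1 A2 b) :
    opLspec A1 A2 a (opRspec A1 A2 b c) = opRspec A1 A2 (opLspec A1 A2 a b) c := by
  have ha := isReducedJ_hatW (A1 := A1) (A2 := A2) a.1
  have hc := (isReducedJ_hatW (A1 := A1) (A2 := A2) c.1).forall_inJ
  rcases hb.cases with ⟨h1, -⟩ | ⟨p, x, q, ⟨hp, hx, hq, -, -⟩, rfl⟩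
  · have hb' := isReducedJ_hatW (A1 := A1) (A2 := A2) b.1
    rw [opRspec_of_isOmegaOne c h1, opLspec_of_isOmegaOne a h1,
      opLspec_toRep a (isReducedJ_foldl_push hb' hc),
      opRspec_toRep c (isReducedJ_foldl_push ha hb'.forall_inJ), foldl_push_foldl_push ha hb' hc]
  obtain ⟨d, s₀, hs, -, hd, hxd, hxs₀⟩ :=
    (isReducedJ_foldl_push hq hc).exists_eq_attachHead x
  obtain ⟨r₀, c₀, hr, hr₀, hc₀, hc₀x, hr₀x⟩ :=
    (isReducedJ_foldl_push ha hp.forall_inJ).exists_eq_attachLast x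
  have hxd' : sameF x (rmulL A1 A2 x d) := (sameF_rmulL x d).symm
  have hc₀x' : sameF (lmulL A1 A2 c₀ x) x := (sameF_lmulL c₀ x).trans hc₀x
  have hleft : opLspec A1 A2 a (marked p (rmulL A1 A2 x d) s₀)
      = marked r₀ (lmulL A1 A2 c₀ (rmulL A1 A2 x d)) s₀ := by
    rw [opLspec_marked a hp (not_inJ_rmulL hx hd hxd), hr,
      glueL_attachLast (hr₀x.of_sameF hxd') (hc₀x.trans hxd')]
  have hright : opRspec A1 A2 (marked r₀ (lmulL A1 A2 c₀ x) q) c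
      = marked r₀ (rmulL A1 A2 (lmulL A1 A2 c₀ x) d) s₀ := by
    rw [opRspec_marked c (not_inJ_lmulL hc₀ hx hc₀x) hq, hs,
      glueR_attachHead (hxs₀.of_sameF hc₀x'.symm) (hc₀x'.trans hxd)]
  rw [opRspec_marked c hx hq, opLspec_marked a hp hx, hs, hr, glueR_attachHead hxs₀ hxd,
    glueL_attachLast hr₀x hc₀x, hleft, hright, lmulL_rmulL hc₀x hxd]

theorem hatW_opLspec_eq_hatW_opRspec {z z' : List (D1 ⊕ D2) × ℕ} (hz : InOmega A1 A2 z)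
    (hz' : InOmega A1 A2 z') :
    hatW A1 A2 (opLspec A1 A2 z z').1 = hatW A1 A2 (opRspec A1 A2 z z').1 := by
  rw [hatW_opLspec z hz', hatW_opRspec hz z']

theorem opLspec_one_left {z : List (D1 ⊕ D2) × ℕ} (hz : InOmega A1 A2 z) :
    opLspec A1 A2 ([Sum.inl A1.one], 1) z = z := by
  rcases hz.cases with ⟨h1, hz⟩ | ⟨p, x, q, ⟨hp, hx, -, hpx, -⟩, rfl⟩
  · rw [opLspec_of_isOmegaOne _ h1, hatW_one, ← reduceW,
      reduceW_of_isReducedJ (isReducedJ_hatW _), hz]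
  · rw [opLspec_marked _ hp hx, hatW_one, ← reduceW, reduceW_of_isReducedJ hp,
      glueL_of_apartLast hpx]

theorem opRspec_one_right {z : List (D1 ⊕ D2) × ℕ} (hz : InOmega A1 A2 z) :
    opRspec A1 A2 z ([Sum.inl A1.one], 1) = z := by
  rcases hz.cases with ⟨h1, hz⟩ | ⟨p, x, q, ⟨-, hx, hq, -, hxq⟩, rfl⟩
  · rw [opRspec_of_isOmegaOne _ h1, hatW_one, List.foldl_nil, hz]
  · rw [opRspec_marked _ hx hq, hatW_one, List.foldl_nil, glueR_of_apartHead hxq]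

theorem opLspec_toRep_invW (z : List (D1 ⊕ D2) × ℕ) :
    opLspec A1 A2 z (toRep A1 (invW A1 A2 (hatW A1 A2 z.1)), 1) = ([Sum.inl A1.one], 1) := by
  rw [opLspec_toRep z (isReducedJ_invW (isReducedJ_hatW _)),
    foldl_push_invW_self (isReducedJ_hatW _)]
  rfl

theorem opRspec_toRep_invW (z : List (D1 ⊕ D2) × ℕ) :
    opRspec A1 A2 (toRep A1 (invW A1 A2 (hatW A1 A2 z.1)), 1) z = ([Sum.inl A1.one], 1) := by
  rw [opRspec_toRep z (isReducedJ_invW (isReducedJ_hatW _)),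
    foldl_push_self_invW (isReducedJ_hatW _)]
  rfl

end Operations

/-- The construction `Ω = Ω₁ ∪ Ω₂` with the operations defined by reduction and
multiplication at the distinguished position is a digroup with bar-unit `[e₁]₁`. -/
theorem omega_is_digroup {D1 D2 : Type}
    (A1 : DigroupStruct D1) (A2 : DigroupStruct D2) :
    ∃ Q : DigroupStruct (Omega A1 A2),
      Q.one.val = ([Sum.inl A1.one], 1) ∧
      (∀ z z' : Omega A1 A2, (Q.l z z').val = opLspec A1 A2 z.val z'.val) ∧
      (∀ z z' : Omega A1 A2, (Q.r z z').val = opRspec A1 A2 z.val z'.val) := by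
  refine ⟨{
      l := fun z z' => ⟨opLspec A1 A2 z.1 z'.1, inOmega_opLspec z.1 z'.2⟩
      r := fun z z' => ⟨opRspec A1 A2 z.1 z'.1, inOmega_opRspec z.2 z'.1⟩
      one := ⟨([Sum.inl A1.one], 1), inOmega_toRep isReducedJ_nil⟩
      inv := fun z => ⟨(toRep A1 (invW A1 A2 (hatW A1 A2 z.1.1)), 1),
        inOmega_toRep (isReducedJ_invW (isReducedJ_hatW _))⟩
      l_assoc := fun _ b c => Subtype.ext (opLspec_opLspec b.2 c.2)
      r_assoc := fun a b _ => Subtype.ext (opRspec_opRspec a.2 b.2)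
      ax1 := fun a b c =>
        Subtype.ext (opRspec_congr_right a.1 (hatW_opLspec_eq_hatW_opRspec b.2 c.2))
      ax2 := fun a b c =>
        Subtype.ext (opLspec_congr_left (hatW_opLspec_eq_hatW_opRspec a.2 b.2).symm c.1)
      ax3 := fun a b c => Subtype.ext (opLspec_opRspec a.1 c.1 b.2)
      one_l := fun z => Subtype.ext (opLspec_one_left z.2)
      r_one := fun z => Subtype.ext (opRspec_one_right z.2)
      l_inv := fun z => Subtype.ext (opLspec_toRep_invW z.1)
      inv_r := fun z => Subtype.ext (opRspec_toRep_invW z.1) },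
    rfl, fun _ _ => rfl, fun _ _ => rfl⟩
end

section
/- The group part of the free product of two digroups (A₁,e₁) and (A₂,e₂) is the free product (as groups) of the group parts J₁ and J₂ of A₁ and A₂: the set {g ⊢ 1 : g ∈ A₁ * A₂} with the induced operation is isomorphic to the group free product J₁ * J₂. -/
section Aux
variable {A : Type} (G : DigroupStruct A)

lemma dg_one_mem : G.one ∈ groupPart G := ⟨G.one, (G.one_l G.one).symm⟩

lemma dg_idem {x : A} (h : x ∈ groupPart G) : G.l x G.one = x := by
  obtain ⟨b, rfl⟩ := h
  rw [G.l_assoc, G.one_l]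

lemma dg_one_r {y : A} (h : y ∈ groupPart G) : G.r G.one y = y := by
  obtain ⟨v, rfl⟩ := h
  calc G.r G.one (G.l v G.one)
      = G.r (G.l v (G.inv v)) (G.l v G.one) := by rw [G.l_inv]
    _ = G.l v (G.r (G.inv v) (G.l v G.one)) := (G.ax3 _ _ _).symm
    _ = G.l v (G.r (G.inv v) (G.r v G.one)) := by rw [G.ax1]
    _ = G.l v (G.r (G.r (G.inv v) v) G.one) := by rw [G.r_assoc]
    _ = G.l v G.one := by rw [G.inv_r, G.r_one]

lemma dg_r_eq_l {x y : A} (hx : x ∈ groupPart G) (hy : y ∈ groupPart G) :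
    G.r x y = G.l x y := by
  calc G.r x y = G.r (G.l x G.one) y := by rw [dg_idem G hx]
    _ = G.l x (G.r G.one y) := (G.ax3 _ _ _).symm
    _ = G.l x y := by rw [dg_one_r G hy]

lemma dg_l_mem {x y : A} (hy : y ∈ groupPart G) : G.l x y ∈ groupPart G := by
  obtain ⟨v, rfl⟩ := hy
  exact ⟨G.l x v, by rw [G.l_assoc]⟩

lemma dg_inv_l {x : A} (hx : x ∈ groupPart G) : G.l (G.inv x) x = G.one := by
  have hw : G.l (G.inv x) x ∈ groupPart G := dg_l_mem G hx
  have h1 : G.r x (G.l (G.inv x) x) = x := by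
    rw [dg_r_eq_l G hx hw, ← G.l_assoc, G.l_inv, G.one_l]
  calc G.l (G.inv x) x = G.r G.one (G.l (G.inv x) x) := (dg_one_r G hw).symm
    _ = G.r (G.r (G.inv x) x) (G.l (G.inv x) x) := by rw [G.inv_r]
    _ = G.r (G.inv x) (G.r x (G.l (G.inv x) x)) := G.r_assoc _ _ _
    _ = G.one := by rw [h1, G.inv_r]

lemma dg_pi_l (a b : A) : G.l (G.l a b) G.one = G.l (G.l a G.one) (G.l b G.one) := by
  rw [G.l_assoc a G.one, G.one_l, G.l_assoc]

lemma dg_pi_r (a b : A) : G.l (G.r a b) G.one = G.r (G.l a G.one) (G.l b G.one) := by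
  rw [G.ax2, dg_pi_l, dg_r_eq_l G ⟨a, rfl⟩ ⟨b, rfl⟩]

/-- Group structure on the group part of a digroup. -/
def groupPartGroup : Group ↥(groupPart G) where
  mul x y := ⟨G.l x y, dg_l_mem G y.2⟩
  one := ⟨G.one, dg_one_mem G⟩
  inv x := ⟨G.l (G.inv ↑x) G.one, ⟨G.inv ↑x, rfl⟩⟩
  mul_assoc a b c := Subtype.ext (G.l_assoc _ _ _)
  one_mul a := Subtype.ext (G.one_l _)
  mul_one a := Subtype.ext (dg_idem G a.2)
  inv_mul_cancel a := Subtype.ext (by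
    show G.l (G.l (G.inv ↑a) G.one) ↑a = G.one
    rw [G.l_assoc, G.one_l]
    exact dg_inv_l G a.2)

end Aux

/-- The group part of a free product of digroups is the free product (coproduct)
of the group parts: there is a map to the group coproduct `J₁ ∗ J₂` which is a
bijection from the group part of `A₁ * A₂` and multiplicative on it. -/
theorem groupPart_of_freeProduct {D1 D2 P : Type}
    (A1 : DigroupStruct D1) (A2 : DigroupStruct D2)
    [G1 : Group ↥(groupPart A1)] [G2 : Group ↥(groupPart A2)]
    (hG1mul : ∀ a b : ↥(groupPart A1), ((a * b : ↥(groupPart A1)) : D1) = A1.l ↑a ↑b)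
    (hG1one : (((1 : ↥(groupPart A1))) : D1) = A1.one)
    (hG2mul : ∀ a b : ↥(groupPart A2), ((a * b : ↥(groupPart A2)) : D2) = A2.l ↑a ↑b)
    (hG2one : (((1 : ↥(groupPart A2))) : D2) = A2.one)
    (Pst : DigroupStruct P) (g1 : D1 → P) (g2 : D2 → P)
    (hfp : IsFreeProduct A1 A2 Pst g1 g2) :
    ∃ φ : P → Monoid.Coprod ↥(groupPart A1) ↥(groupPart A2),
      Set.BijOn φ (groupPart Pst) Set.univ ∧
      φ Pst.one = 1 ∧
      ∀ a ∈ groupPart Pst, ∀ b ∈ groupPart Pst, φ (Pst.l a b) = φ a * φ b := by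
  classical
  obtain ⟨⟨h1l, h1r, h1one⟩, ⟨h2l, h2r, h2one⟩, huniv⟩ := hfp
  -- digroup structure on the group coproduct
  let C : DigroupStruct (Monoid.Coprod ↥(groupPart A1) ↥(groupPart A2)) :=
  { l := (· * ·), r := (· * ·),
    l_assoc := fun a b c => mul_assoc a b c, r_assoc := fun a b c => mul_assoc a b c,
    ax1 := fun _ _ _ => rfl, ax2 := fun _ _ _ => rfl,
    ax3 := fun a b c => (mul_assoc a b c).symm,
    one := 1, inv := (·⁻¹),
    one_l := one_mul, r_one := mul_one,
    l_inv := fun a => mul_inv_cancel a, inv_r := fun a => inv_mul_cancel a }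
  let f1 : D1 → Monoid.Coprod ↥(groupPart A1) ↥(groupPart A2) :=
    fun a => Monoid.Coprod.inl ⟨A1.l a A1.one, a, rfl⟩
  let f2 : D2 → Monoid.Coprod ↥(groupPart A1) ↥(groupPart A2) :=
    fun a => Monoid.Coprod.inr ⟨A2.l a A2.one, a, rfl⟩
  have hf1 : IsDigroupHom A1 C f1 := by
    refine ⟨fun a b => ?_, fun a b => ?_, ?_⟩
    · show Monoid.Coprod.inl _ = Monoid.Coprod.inl _ * Monoid.Coprod.inl _
      rw [← map_mul]
      exact congrArg _ (Subtype.ext (by rw [hG1mul]; exact dg_pi_l A1 a b))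
    · show Monoid.Coprod.inl _ = Monoid.Coprod.inl _ * Monoid.Coprod.inl _
      rw [← map_mul]
      refine congrArg _ (Subtype.ext ?_)
      rw [hG1mul]
      show A1.l (A1.r a b) A1.one = A1.l (A1.l a A1.one) (A1.l b A1.one)
      rw [A1.ax2]; exact dg_pi_l A1 a b
    · show Monoid.Coprod.inl _ = 1
      have : (⟨A1.l A1.one A1.one, A1.one, rfl⟩ : ↥(groupPart A1)) = 1 :=
        Subtype.ext (by rw [hG1one]; exact A1.one_l A1.one)
      rw [this, map_one]
  have hf2 : IsDigroupHom A2 C f2 := by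
    refine ⟨fun a b => ?_, fun a b => ?_, ?_⟩
    · show Monoid.Coprod.inr _ = Monoid.Coprod.inr _ * Monoid.Coprod.inr _
      rw [← map_mul]
      exact congrArg _ (Subtype.ext (by rw [hG2mul]; exact dg_pi_l A2 a b))
    · show Monoid.Coprod.inr _ = Monoid.Coprod.inr _ * Monoid.Coprod.inr _
      rw [← map_mul]
      refine congrArg _ (Subtype.ext ?_)
      rw [hG2mul]
      show A2.l (A2.r a b) A2.one = A2.l (A2.l a A2.one) (A2.l b A2.one)
      rw [A2.ax2]; exact dg_pi_l A2 a b
    · show Monoid.Coprod.inr _ = 1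
      have : (⟨A2.l A2.one A2.one, A2.one, rfl⟩ : ↥(groupPart A2)) = 1 :=
        Subtype.ext (by rw [hG2one]; exact A2.one_l A2.one)
      rw [this, map_one]
  obtain ⟨φ, ⟨⟨hφl, hφr, hφone⟩, hφ1, hφ2⟩, -⟩ := huniv C f1 f2 hf1 hf2
  -- the inverse on the group part
  letI GP : Group ↥(groupPart Pst) := groupPartGroup Pst
  have memg1 : ∀ j : ↥(groupPart A1), g1 ↑j ∈ groupPart Pst := fun j => by
    obtain ⟨b, hb⟩ := j.2
    exact ⟨g1 b, by rw [hb, h1l, h1one]⟩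
  have memg2 : ∀ j : ↥(groupPart A2), g2 ↑j ∈ groupPart Pst := fun j => by
    obtain ⟨b, hb⟩ := j.2
    exact ⟨g2 b, by rw [hb, h2l, h2one]⟩
  let φ1 : ↥(groupPart A1) →* ↥(groupPart Pst) :=
  { toFun := fun j => ⟨g1 ↑j, memg1 j⟩
    map_one' := Subtype.ext (show g1 ↑(1 : ↥(groupPart A1)) = Pst.one by rw [hG1one, h1one])
    map_mul' := fun j k => Subtype.ext
      (show g1 ↑(j * k) = Pst.l (g1 ↑j) (g1 ↑k) by rw [hG1mul, h1l]) }
  let φ2 : ↥(groupPart A2) →* ↥(groupPart Pst) :=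
  { toFun := fun j => ⟨g2 ↑j, memg2 j⟩
    map_one' := Subtype.ext (show g2 ↑(1 : ↥(groupPart A2)) = Pst.one by rw [hG2one, h2one])
    map_mul' := fun j k => Subtype.ext
      (show g2 ↑(j * k) = Pst.l (g2 ↑j) (g2 ↑k) by rw [hG2mul, h2l]) }
  let ψ := Monoid.Coprod.lift φ1 φ2
  have key : ∀ x : P, (↑(ψ (φ x)) : P) = Pst.l x Pst.one := by
    have hθ : IsDigroupHom Pst Pst (fun x => (↑(ψ (φ x)) : P)) := by
      refine ⟨fun a b => ?_, fun a b => ?_, ?_⟩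
      · show (↑(ψ (φ (Pst.l a b))) : P) = Pst.l _ _
        have h : φ (Pst.l a b) = φ a * φ b := hφl a b
        rw [h, map_mul]; rfl
      · show (↑(ψ (φ (Pst.r a b))) : P) = Pst.r _ _
        have h : φ (Pst.r a b) = φ a * φ b := hφr a b
        rw [h, map_mul, dg_r_eq_l Pst (ψ (φ a)).2 (ψ (φ b)).2]; rfl
      · show (↑(ψ (φ Pst.one)) : P) = Pst.one
        rw [hφone]
        show (↑(ψ (1 : Monoid.Coprod ↥(groupPart A1) ↥(groupPart A2))) : P) = Pst.one
        rw [map_one]; rfl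
    have hπ : IsDigroupHom Pst Pst (fun x => Pst.l x Pst.one) :=
      ⟨fun a b => dg_pi_l Pst a b, fun a b => dg_pi_r Pst a b, Pst.one_l Pst.one⟩
    have hf1' : IsDigroupHom A1 Pst (fun a => g1 (A1.l a A1.one)) := by
      refine ⟨fun a b => ?_, fun a b => ?_, ?_⟩
      · show g1 (A1.l (A1.l a b) A1.one) = _
        rw [dg_pi_l A1 a b, h1l]
      · show g1 (A1.l (A1.r a b) A1.one) = _
        rw [dg_pi_r A1 a b, h1r]
      · show g1 (A1.l A1.one A1.one) = _
        rw [A1.one_l, h1one]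
    have hf2' : IsDigroupHom A2 Pst (fun a => g2 (A2.l a A2.one)) := by
      refine ⟨fun a b => ?_, fun a b => ?_, ?_⟩
      · show g2 (A2.l (A2.l a b) A2.one) = _
        rw [dg_pi_l A2 a b, h2l]
      · show g2 (A2.l (A2.r a b) A2.one) = _
        rw [dg_pi_r A2 a b, h2r]
      · show g2 (A2.l A2.one A2.one) = _
        rw [A2.one_l, h2one]
    obtain ⟨χ, -, hun⟩ := huniv Pst _ _ hf1' hf2'
    have hθc : (fun x => (↑(ψ (φ x)) : P)) = χ := by
      refine hun _ ⟨hθ, funext fun a => ?_, funext fun a => ?_⟩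
      · show (↑(ψ (φ (g1 a))) : P) = g1 (A1.l a A1.one)
        have h : φ (g1 a) = f1 a := congrFun hφ1 a
        rw [h]
        show (↑(ψ (Monoid.Coprod.inl _)) : P) = _
        rw [Monoid.Coprod.lift_apply_inl]
        rfl
      · show (↑(ψ (φ (g2 a))) : P) = g2 (A2.l a A2.one)
        have h : φ (g2 a) = f2 a := congrFun hφ2 a
        rw [h]
        show (↑(ψ (Monoid.Coprod.inr _)) : P) = _
        rw [Monoid.Coprod.lift_apply_inr]
        rfl
    have hπc : (fun x => Pst.l x Pst.one) = χ := by
      refine hun _ ⟨hπ, funext fun a => ?_, funext fun a => ?_⟩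
      · show Pst.l (g1 a) Pst.one = g1 (A1.l a A1.one)
        rw [← h1one, ← h1l]
      · show Pst.l (g2 a) Pst.one = g2 (A2.l a A2.one)
        rw [← h2one, ← h2l]
    exact fun x => congrFun (hθc.trans hπc.symm) x
  refine ⟨φ, ⟨fun x _ => trivial, ?_, ?_⟩, hφone, fun a _ b _ => hφl a b⟩
  · intro x hx y hy hxy
    calc x = Pst.l x Pst.one := (dg_idem Pst hx).symm
      _ = ↑(ψ (φ x)) := (key x).symm
      _ = ↑(ψ (φ y)) := by rw [hxy]
      _ = Pst.l y Pst.one := key y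
      _ = y := dg_idem Pst hy
  · rintro c -
    induction c using Monoid.Coprod.induction_on with
    | inl m =>
      exact ⟨g1 ↑m, memg1 m,
        (congrFun hφ1 ↑m).trans (congrArg Monoid.Coprod.inl (Subtype.ext (dg_idem A1 m.2)))⟩
    | inr n =>
      exact ⟨g2 ↑n, memg2 n,
        (congrFun hφ2 ↑n).trans (congrArg Monoid.Coprod.inr (Subtype.ext (dg_idem A2 n.2)))⟩
    | mul x y ihx ihy =>
      obtain ⟨a, ha, rfl⟩ := ihx
      obtain ⟨b, hb, rfl⟩ := ihy
      exact ⟨Pst.l a b, dg_l_mem Pst hb, hφl a b⟩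
end

section
/- Let (F(X),e₁) be the free digroup on a set X and (D,e₂) a digroup every element of which is a bar-unit (halo part E = D). Then the set Ω₁ ∪ Ω₂, where Ω₁ = {[e₁u]₁ : u ∈ F_grp(X)} (F_grp(X) the free group on X realized by reduced words) and Ω₂ = {[pxq]_{|p|+1} : p,q ∈ F_grp(X), x ∈ X ∪ D°}, with operations [w]_n ⊢ [e₁u]₁ = [e₁ (wu)~]₁, [w]_n ⊢ [pxq]_{|p|+1} = [(wp)~ x q]_{|(wp)~|+1}, [e₁u]₁ ⊣ [w]_n = [e₁ (uw)~]₁, [pxq]_{|p|+1} ⊣ [w]_n = [p x (qw)~]_{|p|+1} (where v~ denotes group reduction of the projection to free-group letters), is a free product of (F(X),e₁) and (D,e₂) as digroups. -/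
/-- `F` (with generators `ι : X → A`) is the free digroup on `X`. -/
def IsFreeDigroup {X A : Type} (F : DigroupStruct A) (ι : X → A) : Prop :=
  ∀ {B : Type} (G : DigroupStruct B) (f : X → B),
    ∃! φ : A → B, IsDigroupHom F G φ ∧ φ ∘ ι = f

section Example1

variable (X : Type) {D : Type} (Dst : DigroupStruct D)

/-- The carrier `Ω₁ ∪ Ω₂` of the free product of the free digroup `F(X)` and an
all-bar-unit digroup `D`: `Ω₁ = {[e₁u]₁ : u ∈ gp⟨X⟩}` and
`Ω₂ = {[pxq]_{|p|+1} : p, q ∈ gp⟨X⟩, x ∈ X ∪ D°}`. -/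
def Omega10 : Type :=
  FreeGroup X ⊕ (FreeGroup X × (X ⊕ {d : D // d ≠ Dst.one}) × FreeGroup X)

/-- The group-part image of an element of `Ω`. -/
def hat10 : Omega10 X Dst → FreeGroup X
  | Sum.inl u => u
  | Sum.inr (p, Sum.inl x, q) => p * FreeGroup.of x * q
  | Sum.inr (p, Sum.inr _, q) => p * q

/-- `[w]_n ⊢ [e₁u]₁ = [e₁(wu)~]₁` and `[w]_n ⊢ [pxq]_{|p|+1} = [(wp)~xq]_{|(wp)~|+1}`. -/
def opL10 (z z' : Omega10 X Dst) : Omega10 X Dst :=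
  match z' with
  | Sum.inl u => Sum.inl (hat10 X Dst z * u)
  | Sum.inr (p, x, q) => Sum.inr (hat10 X Dst z * p, x, q)

/-- `[e₁u]₁ ⊣ [w]_n = [e₁(uw)~]₁` and `[pxq]_{|p|+1} ⊣ [w]_n = [px(qw)~]_{|p|+1}`. -/
def opR10 (z z' : Omega10 X Dst) : Omega10 X Dst :=
  match z with
  | Sum.inl u => Sum.inl (u * hat10 X Dst z')
  | Sum.inr (p, x, q) => Sum.inr (p, x, q * hat10 X Dst z')

end Example1
/-!
Every element of `Ω` is `(p ⊢ x) ⊣ q` with `p, q` in the group part, which is a copy of `gp⟨X⟩`,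
and `x` a generator from `X ∪ D°`; so a digroup homomorphism out of `Ω` is determined by its
values on the generators. Conversely, given homomorphisms `f₁ : F(X) → G` and `f₂ : D → G`, let
`τ : gp⟨X⟩ → J(G)` be the group homomorphism into the group part of `G` extending
`x ↦ f₁ x ⊢ 1`, and send `[pxq]` to `(τ p ⊢ v x) ⊣ τ q`, where `v` is `f₁` on `X` and `f₂` on `D°`.
Since `D` consists of bar-units, `f₂` lands in the halo of `G`; hence `a ⊢ -` and `- ⊣ a` only
depend on `τ` of the image of `a` in `gp⟨X⟩`, which is exactly how `Ω` multiplies, and the map is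
a homomorphism.
-/

namespace DigroupStruct

variable {C : Type} (G : DigroupStruct C)

theorem mem_groupPart_iff {a : C} : a ∈ groupPart G ↔ G.l a G.one = a :=
  ⟨by rintro ⟨b, rfl⟩; rw [G.l_assoc, G.one_l], fun h => ⟨a, h.symm⟩⟩

theorem l_one_mem_groupPart (a : C) : G.l a G.one ∈ groupPart G := ⟨a, rfl⟩

theorem one_r_of_mem_groupPart {j : C} (hj : j ∈ groupPart G) : G.r G.one j = j := by
  rw [← G.l_inv j, ← G.ax3, G.inv_r, (G.mem_groupPart_iff).1 hj]

theorem r_eq_l_of_mem_groupPart {a j : C} (ha : a ∈ groupPart G) (hj : j ∈ groupPart G) :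
    G.r a j = G.l a j := by
  conv_lhs => rw [← (G.mem_groupPart_iff).1 ha, ← G.ax3, G.one_r_of_mem_groupPart hj]

instance : One (groupPart G) := ⟨⟨G.one, G.one, (G.one_l G.one).symm⟩⟩

instance : Mul (groupPart G) :=
  ⟨fun a b => ⟨G.l a b, (G.mem_groupPart_iff).2 <| by rw [G.l_assoc, (G.mem_groupPart_iff).1 b.2]⟩⟩

instance : Inv (groupPart G) := ⟨fun a => ⟨G.l (G.inv a) G.one, G.l_one_mem_groupPart _⟩⟩

instance : Group (groupPart G) :=
  Group.ofRightAxioms (fun a b c => Subtype.ext (G.l_assoc a b c))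
    (fun a => Subtype.ext ((G.mem_groupPart_iff).1 a.2))
    (fun a => Subtype.ext <| by
      change G.l a (G.l (G.inv a) G.one) = G.one
      rw [← G.l_assoc, G.l_inv, G.one_l])

@[simp] theorem coe_groupPart_one : ((1 : groupPart G) : C) = G.one := rfl

@[simp] theorem coe_groupPart_mul (a b : groupPart G) : ((a * b : groupPart G) : C) = G.l a b :=
  rfl

theorem mem_halo_of_l_one_of_one_r {e : C} (hl : G.l e G.one = G.one)
    (hr : G.r G.one e = G.one) : e ∈ halo G := fun a =>
  ⟨by conv_lhs => rw [← G.one_l a, ← G.l_assoc, hl, G.one_l],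
    by conv_lhs => rw [← G.r_one a, G.r_assoc, hr, G.r_one]⟩

end DigroupStruct

namespace IsDigroupHom

variable {A B C : Type} {G : DigroupStruct A} {H : DigroupStruct B} {K : DigroupStruct C}

theorem map_mem_halo {f : A → B} (hf : IsDigroupHom G H f) {e : A} (he : e ∈ halo G) :
    f e ∈ halo H :=
  H.mem_halo_of_l_one_of_one_r (by rw [← hf.2.2, ← hf.1, ((he G.one).1)])
    (by rw [← hf.2.2, ← hf.2.1, (he G.one).2])

theorem comp {f : A → B} {g : B → C} (hf : IsDigroupHom G H f) (hg : IsDigroupHom H K g) :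
    IsDigroupHom G K (g ∘ f) :=
  ⟨fun a b => by simp only [Function.comp, hf.1, hg.1],
    fun a b => by simp only [Function.comp, hf.2.1, hg.2.1],
    by simp only [Function.comp, hf.2.2, hg.2.2]⟩

end IsDigroupHom

theorem IsFreeDigroup.hom_ext {X A B : Type} {F : DigroupStruct A} {ι : X → A}
    (hF : IsFreeDigroup F ι) {G : DigroupStruct B} {φ ψ : A → B} (hφ : IsDigroupHom F G φ)
    (hψ : IsDigroupHom F G ψ) (h : φ ∘ ι = ψ ∘ ι) : φ = ψ :=
  (hF G (ψ ∘ ι)).unique ⟨hφ, h⟩ ⟨hψ, rfl⟩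

namespace Omega10

variable {X D : Type} {Dst : DigroupStruct D}

@[simp] theorem opL_inl (z : Omega10 X Dst) (u : FreeGroup X) :
    opL10 X Dst z (Sum.inl u) = Sum.inl (hat10 X Dst z * u) := rfl

@[simp] theorem opL_inr (z : Omega10 X Dst) (p q : FreeGroup X) (x) :
    opL10 X Dst z (Sum.inr (p, x, q)) = Sum.inr (hat10 X Dst z * p, x, q) := rfl

@[simp] theorem opR_inl (z : Omega10 X Dst) (u : FreeGroup X) :
    opR10 X Dst (Sum.inl u) z = Sum.inl (u * hat10 X Dst z) := rfl

@[simp] theorem opR_inr (z : Omega10 X Dst) (p q : FreeGroup X) (x) :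
    opR10 X Dst (Sum.inr (p, x, q)) z = Sum.inr (p, x, q * hat10 X Dst z) := rfl

@[simp] theorem hat_inl (u : FreeGroup X) : hat10 X Dst (Sum.inl u) = u := rfl

@[simp] theorem hat_inr_inl (p q : FreeGroup X) (x : X) :
    hat10 X Dst (Sum.inr (p, Sum.inl x, q)) = p * FreeGroup.of x * q := rfl

@[simp] theorem hat_inr_inr (p q : FreeGroup X) (d : {d : D // d ≠ Dst.one}) :
    hat10 X Dst (Sum.inr (p, Sum.inr d, q)) = p * q := rfl

@[simp] theorem hat_opL (z z' : Omega10 X Dst) :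
    hat10 X Dst (opL10 X Dst z z') = hat10 X Dst z * hat10 X Dst z' := by
  rcases z' with u | ⟨p, x | d, q⟩ <;> simp [mul_assoc]

@[simp] theorem hat_opR (z z' : Omega10 X Dst) :
    hat10 X Dst (opR10 X Dst z z') = hat10 X Dst z * hat10 X Dst z' := by
  rcases z with u | ⟨p, x | d, q⟩ <;> simp [mul_assoc]

/- `rcases` exposes the sum type underneath `Omega10`, so `simp` can leave goals such as
`Sum.inl u = Sum.inl u` whose two sides have types `Omega10 X Dst` and `_ ⊕ _`; `rfl` closes them. -/
theorem opL_eq_of_hat_eq_one {z : Omega10 X Dst} (h : hat10 X Dst z = 1) (z' : Omega10 X Dst) :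
    opL10 X Dst z z' = z' := by
  rcases z' with u | ⟨p, x, q⟩ <;> simp [h] <;> rfl

theorem opR_eq_of_hat_eq_one (z : Omega10 X Dst) {z' : Omega10 X Dst} (h : hat10 X Dst z' = 1) :
    opR10 X Dst z z' = z := by
  rcases z with u | ⟨p, x, q⟩ <;> simp [h] <;> rfl

variable (X Dst) in
def digroup : DigroupStruct (Omega10 X Dst) where
  l := opL10 X Dst
  r := opR10 X Dst
  one := Sum.inl 1
  inv z := Sum.inl (hat10 X Dst z)⁻¹
  l_assoc a b c := by rcases c with u | ⟨p, x, q⟩ <;> simp [mul_assoc] <;> rfl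
  r_assoc a b c := by rcases a with u | ⟨p, x, q⟩ <;> simp [mul_assoc] <;> rfl
  ax1 a b c := by rcases a with u | ⟨p, x, q⟩ <;> simp <;> rfl
  ax2 a b c := by rcases c with u | ⟨p, x, q⟩ <;> simp <;> rfl
  ax3 a b c := by rcases b with u | ⟨p, x, q⟩ <;> simp [mul_assoc] <;> rfl
  one_l a := opL_eq_of_hat_eq_one rfl a
  r_one a := opR_eq_of_hat_eq_one a rfl
  l_inv a := congrArg Sum.inl (mul_inv_cancel (hat10 X Dst a))
  inv_r a := congrArg Sum.inl (inv_mul_cancel (hat10 X Dst a))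

def gen (x : X ⊕ {d : D // d ≠ Dst.one}) : Omega10 X Dst := Sum.inr (1, x, 1)

theorem inl_of_eq (x : X) :
    Sum.inl (FreeGroup.of x) = (digroup X Dst).l (gen (Sum.inl x)) (digroup X Dst).one :=
  congrArg Sum.inl (by simp [gen])

theorem inr_eq (p q : FreeGroup X) (x : X ⊕ {d : D // d ≠ Dst.one}) :
    Sum.inr (p, x, q) =
      (digroup X Dst).r ((digroup X Dst).l (Sum.inl p) (gen x)) (Sum.inl q) :=
  congrArg Sum.inr (by simp)

variable (X) in
open Classical in
noncomputable def ofRight (d : D) : Omega10 X Dst :=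
  if h : d = Dst.one then Sum.inl 1 else gen (Sum.inr ⟨d, h⟩)

theorem ofRight_one : ofRight X Dst.one = (Sum.inl 1 : Omega10 X Dst) := dif_pos rfl

theorem ofRight_of_ne {d : D} (h : d ≠ Dst.one) : ofRight X d = gen (Sum.inr ⟨d, h⟩) :=
  dif_neg h

theorem hat_ofRight (d : D) : hat10 X Dst (ofRight X d) = 1 := by
  by_cases h : d = Dst.one
  · rw [h, ofRight_one]; rfl
  · rw [ofRight_of_ne h]; simp [gen]

theorem ofRight_isDigroupHom (hD : ∀ e, e ∈ halo Dst) :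
    IsDigroupHom Dst (digroup X Dst) (ofRight X) :=
  ⟨fun a b => by rw [(hD a b).1]; exact (opL_eq_of_hat_eq_one (hat_ofRight a) _).symm,
    fun a b => by rw [(hD b a).2]; exact (opR_eq_of_hat_eq_one _ (hat_ofRight b)).symm,
    ofRight_one⟩

section Lift

variable {C : Type} (G : DigroupStruct C) (v : X ⊕ {d : D // d ≠ Dst.one} → C)

def liftGroupPart : FreeGroup X →* groupPart G :=
  FreeGroup.lift fun x => ⟨G.l (v (Sum.inl x)) G.one, G.l_one_mem_groupPart _⟩

def lift : Omega10 X Dst → C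
  | Sum.inl u => liftGroupPart G v u
  | Sum.inr (p, x, q) => G.r (G.l (liftGroupPart G v p) (v x)) (liftGroupPart G v q)

theorem lift_gen (x : X ⊕ {d : D // d ≠ Dst.one}) : lift G v (gen x) = v x := by
  simp [lift, gen, G.one_l, G.r_one]

variable {G v}

theorem l_lift (hv : ∀ w, v (Sum.inr w) ∈ halo G) (z : Omega10 X Dst) (c : C) :
    G.l (lift G v z) c = G.l (liftGroupPart G v (hat10 X Dst z) : C) c := by
  rcases z with u | ⟨p, x | d, q⟩
  · rfl
  · simp [lift, liftGroupPart, G.ax2, G.l_assoc, G.one_l]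
  · simp [lift, liftGroupPart, G.ax2, G.l_assoc, (hv d _).1]

theorem r_lift (hv : ∀ w, v (Sum.inr w) ∈ halo G) (z : Omega10 X Dst) (c : C) :
    G.r c (lift G v z) = G.r c (liftGroupPart G v (hat10 X Dst z) : C) := by
  rcases z with u | ⟨p, x | d, q⟩
  · rfl
  · simp [lift, liftGroupPart, G.ax1, ← G.r_assoc, G.r_one]
  · simp [lift, liftGroupPart, G.ax1, ← G.r_assoc, (hv d _).2]

theorem lift_isDigroupHom (hv : ∀ w, v (Sum.inr w) ∈ halo G) :
    IsDigroupHom (digroup X Dst) G (lift G v) := by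
  refine ⟨fun z z' => ?_, fun z z' => ?_, rfl⟩
  · rcases z' with u | ⟨p, x, q⟩
    · change (liftGroupPart G v (hat10 X Dst z * u) : C) = _
      rw [l_lift hv, map_mul, DigroupStruct.coe_groupPart_mul]
      rfl
    · change G.r (G.l (liftGroupPart G v (hat10 X Dst z * p) : C) (v x)) _ = _
      rw [lift, G.ax3, l_lift hv, map_mul, DigroupStruct.coe_groupPart_mul, G.l_assoc]
  · rcases z with u | ⟨p, x, q⟩
    · change (liftGroupPart G v (u * hat10 X Dst z') : C) = _
      rw [r_lift hv, map_mul, DigroupStruct.coe_groupPart_mul]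
      exact (G.r_eq_l_of_mem_groupPart (Subtype.prop _) (Subtype.prop _)).symm
    · change G.r _ (liftGroupPart G v (q * hat10 X Dst z') : C) = _
      rw [lift, G.r_assoc, r_lift hv, map_mul, DigroupStruct.coe_groupPart_mul, G.ax1]

variable (G) in
def restrictInl {ψ : Omega10 X Dst → C} (hψ : IsDigroupHom (digroup X Dst) G ψ) :
    FreeGroup X →* groupPart G :=
  MonoidHom.mk' (fun u => ⟨ψ (Sum.inl u), (G.mem_groupPart_iff).2 <|
      (congrArg _ hψ.2.2.symm).trans ((hψ.1 _ _).symm.trans (congrArg (ψ ∘ Sum.inl) (mul_one u)))⟩)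
    fun u w => Subtype.ext (hψ.1 (Sum.inl u) (Sum.inl w))

theorem map_inr {ψ : Omega10 X Dst → C} (hψ : IsDigroupHom (digroup X Dst) G ψ)
    (p q : FreeGroup X) (x : X ⊕ {d : D // d ≠ Dst.one}) :
    ψ (Sum.inr (p, x, q)) = G.r (G.l (ψ (Sum.inl p)) (ψ (gen x))) (ψ (Sum.inl q)) :=
  (congrArg ψ (inr_eq p q x)).trans ((hψ.2.1 _ _).trans (congrArg (G.r · _) (hψ.1 _ _)))

theorem hom_ext {ψ₁ ψ₂ : Omega10 X Dst → C} (h₁ : IsDigroupHom (digroup X Dst) G ψ₁)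
    (h₂ : IsDigroupHom (digroup X Dst) G ψ₂) (h : ∀ x, ψ₁ (gen x) = ψ₂ (gen x)) : ψ₁ = ψ₂ := by
  have hinl : restrictInl G h₁ = restrictInl G h₂ := FreeGroup.ext_hom _ _ fun x =>
    Subtype.ext <| show ψ₁ _ = ψ₂ _ by rw [inl_of_eq, h₁.1, h₂.1, h₁.2.2, h₂.2.2, h]
  funext z
  rcases z with u | ⟨p, x, q⟩
  · exact congrArg Subtype.val (DFunLike.congr_fun hinl u)
  · have hinl' (u : FreeGroup X) : ψ₁ (Sum.inl u) = ψ₂ (Sum.inl u) :=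
      congrArg Subtype.val (DFunLike.congr_fun hinl u)
    rw [map_inr h₁, map_inr h₂, hinl', hinl', h]

end Lift

end Omega10

/-- The explicit construction of the free product of a free digroup `F(X)` and a
digroup `D` all of whose elements are bar-units. -/
theorem freeProduct_freeDigroup_halo {X A D : Type}
    (Fst : DigroupStruct A) (ι : X → A) (hF : IsFreeDigroup Fst ι)
    (Dst : DigroupStruct D) (hD : ∀ e a, Dst.l e a = a ∧ Dst.r a e = a) :
    ∃ (Q : DigroupStruct (Omega10 X Dst)) (g1 : A → Omega10 X Dst)
      (g2 : D → Omega10 X Dst),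
      Q.l = opL10 X Dst ∧ Q.r = opR10 X Dst ∧ Q.one = Sum.inl 1 ∧
      (∀ x : X, g1 (ι x) = Sum.inr (1, Sum.inl x, 1)) ∧
      (∀ d (h : d ≠ Dst.one), g2 d = Sum.inr (1, Sum.inr ⟨d, h⟩, 1)) ∧
      g2 Dst.one = Sum.inl 1 ∧
      IsFreeProduct Fst Dst Q g1 g2 := by
  obtain ⟨g1, ⟨hg1, hg1ι⟩, -⟩ := hF (Omega10.digroup X Dst) (Omega10.gen ∘ Sum.inl)
  have hg1x (x : X) : g1 (ι x) = Omega10.gen (Sum.inl x) := congrFun hg1ι x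
  refine ⟨Omega10.digroup X Dst, g1, Omega10.ofRight X, rfl, rfl, rfl, hg1x,
    fun d h => Omega10.ofRight_of_ne h, Omega10.ofRight_one, hg1,
    Omega10.ofRight_isDigroupHom hD, fun G f1 f2 hf1 hf2 => ?_⟩
  set v : X ⊕ {d : D // d ≠ Dst.one} → _ := Sum.elim (f1 ∘ ι) (f2 ∘ Subtype.val)
  have hv : ∀ w, v (Sum.inr w) ∈ halo G := fun w => hf2.map_mem_halo (hD w)
  have hlift := Omega10.lift_isDigroupHom hv
  refine ⟨Omega10.lift G v, ⟨hlift, ?_, ?_⟩, fun ψ ⟨hψ, hψ1, hψ2⟩ => ?_⟩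
  · refine hF.hom_ext (hg1.comp hlift) hf1 (funext fun x => ?_)
    rw [Function.comp_apply, Function.comp_apply, hg1x, Omega10.lift_gen]
    rfl
  · funext d
    by_cases h : d = Dst.one
    · subst h
      rw [Function.comp, Omega10.ofRight_one, hf2.2.2]
      rfl
    · rw [Function.comp, Omega10.ofRight_of_ne h, Omega10.lift_gen]
      rfl
  · refine Omega10.hom_ext hψ hlift fun x => ?_
    rcases x with x | d
    · rw [Omega10.lift_gen, ← hg1x]
      exact congrFun hψ1 (ι x)
    · rw [Omega10.lift_gen, ← Omega10.ofRight_of_ne d.2]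
      exact congrFun hψ2 d
end

section
/- Let (D₁,e₁) and (D₂,e₂) be digroups in which every element is a bar-unit (halo part Eᵢ = Dᵢ, equivalently the group part is trivial). Then a free product of (D₁,e₁) and (D₂,e₂) is the digroup D₁ ∪ D₂° (amalgamating e₂ with e₁), in which again every element is a bar-unit. -/
/-- The "projection" digroup on any pointed type. -/
def projDigroup {B : Type} (o : B) : DigroupStruct B where
  l := fun _ y => y
  r := fun x _ => x
  l_assoc := fun _ _ _ => rfl
  r_assoc := fun _ _ _ => rfl
  ax1 := fun _ _ _ => rfl
  ax2 := fun _ _ _ => rfl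
  ax3 := fun _ _ _ => rfl
  one := o
  inv := fun _ => o
  one_l := fun _ => rfl
  r_one := fun _ => rfl
  l_inv := fun _ => rfl
  inv_r := fun _ => rfl

/-- In any digroup, if `G.l x G.one = G.one` and `G.r G.one x = G.one`,
then `x` is a bar-unit. -/
lemma barUnit_of_fix_one {C : Type} (G : DigroupStruct C) (x : C)
    (hl : G.l x G.one = G.one) (hr : G.r G.one x = G.one) :
    ∀ a, G.l x a = a ∧ G.r a x = a := by
  intro a
  constructor
  · calc G.l x a = G.l x (G.l G.one a) := by rw [G.one_l]
    _ = G.l (G.l x G.one) a := (G.l_assoc _ _ _).symm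
    _ = a := by rw [hl, G.one_l]
  · calc G.r a x = G.r (G.r a G.one) x := by rw [G.r_one]
    _ = G.r a (G.r G.one x) := G.r_assoc _ _ _
    _ = a := by rw [hr, G.r_one]

/-- Homs out of an all-halo digroup land in the halo. -/
lemma hom_image_halo {A C : Type} (D : DigroupStruct A) (G : DigroupStruct C)
    (hD : ∀ e a, D.l e a = a ∧ D.r a e = a) (f : A → C) (hf : IsDigroupHom D G f) :
    ∀ x a, G.l (f x) a = a ∧ G.r a (f x) = a := by
  intro x
  apply barUnit_of_fix_one
  · have := hf.1 x D.one
    rw [(hD x D.one).1, hf.2.2] at this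
    exact this.symm
  · have := hf.2.1 D.one x
    rw [(hD x D.one).2, hf.2.2] at this
    exact this.symm

/-- If every element of the digroups `(D₁,e₁)` and `(D₂,e₂)` is a bar-unit, then
a free product is `D₁ ∪ D₂°` (amalgamating `e₂` with `e₁`) with the projection
operations `x ⊢ y = y`, `x ⊣ y = x`; again every element is a bar-unit. -/
theorem freeProduct_of_halo_digroups {D1 D2 : Type}
    (D1st : DigroupStruct D1) (D2st : DigroupStruct D2)
    (h1 : ∀ e a, D1st.l e a = a ∧ D1st.r a e = a)
    (h2 : ∀ e a, D2st.l e a = a ∧ D2st.r a e = a) :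
    ∃ (Q : DigroupStruct (D1 ⊕ {d : D2 // d ≠ D2st.one}))
      (g1 : D1 → D1 ⊕ {d : D2 // d ≠ D2st.one})
      (g2 : D2 → D1 ⊕ {d : D2 // d ≠ D2st.one}),
      (∀ x y, Q.l x y = y) ∧ (∀ x y, Q.r x y = x) ∧
      Q.one = Sum.inl D1st.one ∧
      (∀ e a, Q.l e a = a ∧ Q.r a e = a) ∧
      g1 = Sum.inl ∧
      (∀ d (h : d ≠ D2st.one), g2 d = Sum.inr ⟨d, h⟩) ∧
      g2 D2st.one = Sum.inl D1st.one ∧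
      IsFreeProduct D1st D2st Q g1 g2 := by
  classical
  set B := D1 ⊕ {d : D2 // d ≠ D2st.one}
  refine ⟨projDigroup (Sum.inl D1st.one),
        Sum.inl,
        fun d => if h : d = D2st.one then Sum.inl D1st.one else Sum.inr ⟨d, h⟩,
        fun _ _ => rfl, fun _ _ => rfl, rfl, fun _ _ => ⟨rfl, rfl⟩, rfl,
        fun d h => dif_neg h, dif_pos rfl, ?_⟩
  refine ⟨⟨fun a b => congrArg Sum.inl (h1 a b).1, fun a b => congrArg Sum.inl (h1 b a).2, rfl⟩,
          ⟨?_, ?_, dif_pos rfl⟩, ?_⟩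
  · intro a b; rw [(h2 a b).1]; rfl
  · intro a b; rw [(h2 b a).2]; rfl
  intro C G f1 f2 hf1 hf2
  have H1 := hom_image_halo D1st G h1 f1 hf1
  have H2 := hom_image_halo D2st G h2 f2 hf2
  refine ⟨fun x => Sum.elim f1 (fun d => f2 d.1) x, ⟨⟨?_, ?_, hf1.2.2⟩, rfl, ?_⟩, ?_⟩
  · rintro (a | a) (b | b) <;> simp [projDigroup] <;>
      first
      | exact (H1 a _).1.symm
      | exact (H2 a _).1.symm
  · rintro (a | a) (b | b) <;> simp [projDigroup] <;>
      first
      | exact (H1 b _).2.symm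
      | exact (H2 b _).2.symm
  · funext d
    by_cases h : d = D2st.one
    · subst h
      rw [Function.comp_apply, dif_pos rfl]
      exact hf1.2.2.trans hf2.2.2.symm
    · simp [Function.comp, dif_neg h]
  · rintro ψ ⟨hψ, hg1, hg2⟩
    funext x
    rcases x with a | ⟨d, h⟩
    · exact congrFun hg1 a
    · have := congrFun hg2 d
      simpa [Function.comp, dif_neg h] using this
end

section
/- In any digroup (G,1), for all a, b ∈ G the identity (a ⊣ b) ⊢ 1 = (a ⊢ b) ⊢ 1 holds, and the map a ↦ a ⊢ 1 is a disemigroup homomorphism from G onto its group part J (where on J both operations agree). -/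

lemma one_r_eq {A : Type} (G : DigroupStruct A) (a : A) : G.r G.one a = G.l a G.one := by
  have h : G.r (G.l a (G.inv a)) a = G.l a (G.r (G.inv a) a) := (G.ax3 a (G.inv a) a).symm
  rw [G.l_inv, G.inv_r] at h
  exact h

lemma l_l_one {A : Type} (G : DigroupStruct A) (a b : A) :
    G.l (G.l a b) G.one = G.l (G.l a G.one) (G.l b G.one) := by
  rw [G.l_assoc a G.one, G.one_l, G.l_assoc]

lemma lr_eq {A : Type} (G : DigroupStruct A) (x y : A) :
    G.l (G.l x G.one) (G.l y G.one) = G.r (G.l x G.one) (G.l y G.one) := by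
  rw [← l_l_one, ← G.ax3, one_r_eq, G.l_assoc y G.one G.one, G.one_l, G.l_assoc]

/-- In any digroup, `(a ⊣ b) ⊢ 1 = (a ⊢ b) ⊢ 1`, and `a ↦ a ⊢ 1` is a
disemigroup homomorphism from `G` onto its group part `J` (on which the two
operations agree). -/
theorem map_to_groupPart_hom {D : Type} (G : DigroupStruct D) :
    (∀ a b, G.l (G.r a b) G.one = G.l (G.l a b) G.one) ∧
    (∀ a b, G.l (G.l a b) G.one = G.l (G.l a G.one) (G.l b G.one)) ∧
    (∀ a b, G.l (G.r a b) G.one = G.r (G.l a G.one) (G.l b G.one)) ∧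
    Set.range (fun a => G.l a G.one) = groupPart G ∧
    (∀ a ∈ groupPart G, ∀ b ∈ groupPart G, G.l a b = G.r a b) := by
  refine ⟨fun a b => G.ax2 a b G.one, l_l_one G, ?_, ?_, ?_⟩
  · intro a b
    rw [G.ax2 a b, l_l_one G, lr_eq]
  · ext x
    simp [Set.range, groupPart, eq_comm]
  · rintro a ⟨x, rfl⟩ b ⟨y, rfl⟩
    exact lr_eq G x y
end
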